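/- arXiv:1604.07282 — 4 statements merged into one kernel-verified Lean document; each statement's English description precedes it below -/
import Mathlib

section
/- Suppose 0 < 1/n ≪ ε ≪ d ≤ 1 and let G be an (ε,d)-super-regular bipartite graph with parts U, W of size n each. Then for every edge e of G, the proportion |M_e(G)|/|M(G)| of perfect matchings of G containing e equals (1 ± ε^{1/20})·1/(dn). Equivalently, if a perfect matching σ of G is chosen uniformly at random, then for any edge uv ∈ E(G) with u ∈ U and v ∈ W, P[σ(u) = v] = (1 ± ε^{1/20})/(dn). -/
open Finset

open Classical in
/-- The set of perfect matchings of the bipartite graph `E` between two copies of `Fin n`,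
identified with the permutations `σ` such that every `i` is joined to `σ i`. -/
noncomputable def matchings (n : ℕ) (E : Fin n → Fin n → Prop) : Finset (Equiv.Perm (Fin n)) :=
  Finset.univ.filter fun σ => ∀ i, E i (σ i)

open Classical in
/-- The edge density between `A ⊆ U` and `B ⊆ W`. -/
noncomputable def bdens (n : ℕ) (E : Fin n → Fin n → Prop) (A B : Finset (Fin n)) : ℝ :=
  (((A ×ˢ B).filter fun p => E p.1 p.2).card : ℝ) / ((A.card : ℝ) * (B.card : ℝ))

open Classical in
/-- Degree of a left vertex. -/
noncomputable def degR (n : ℕ) (E : Fin n → Fin n → Prop) (u : Fin n) : ℕ :=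
  (Finset.univ.filter fun w => E u w).card

open Classical in
/-- Degree of a right vertex. -/
noncomputable def degL (n : ℕ) (E : Fin n → Fin n → Prop) (w : Fin n) : ℕ :=
  (Finset.univ.filter fun u => E u w).card

/-- `(ε,d)`-regularity of the bipartite graph `E` with parts of size `n`. -/
def BipRegular (n : ℕ) (E : Fin n → Fin n → Prop) (ε d : ℝ) : Prop :=
  ∀ A B : Finset (Fin n), ε * n < A.card → ε * n < B.card → |bdens n E A B - d| ≤ ε

/-- `(ε,d)`-super-regularity. -/
def BipSuperRegular (n : ℕ) (E : Fin n → Fin n → Prop) (ε d : ℝ) : Prop :=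
  BipRegular n E ε d ∧ (∀ u, |(degR n E u : ℝ) - d * n| ≤ ε * n) ∧
    (∀ w, |(degL n E w : ℝ) - d * n| ≤ ε * n)


/-!
Fix `u` and two neighbours `v ≠ w` of `u`. A perfect matching `σ` with `σ u = v` is switched to
one with `τ u = w` by rotating the matched vertices `v → w → σ y → z → v` along an alternating
cycle. The admissible switches of `σ`, and the switches producing a given `τ`, are both counted
by edges between two neighbourhoods of size `(d ± ε) n`, so regularity gives at least
`(d - ε)³ n² - 5 n` switches out of every `σ` and at most `(d + ε)³ n²` into every `τ`. Hence the
numbers of perfect matchings through `uv` and through `uw` agree up to a factor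
`1 + O(ε / d + 1 / (d³ n))`; as the perfect matchings split according to the `(d ± ε) n`
neighbours of `u`, each share is `(1 ± ε^(1/20)) / (d n)`.
-/

open Equiv

lemma card_filter_perm_apply {α : Type*} [Fintype α] (σ : Perm α) (P : α → Prop)
    [DecidablePred P] : #(univ.filter fun y => P (σ y)) = #(univ.filter P) :=
  card_nbij' σ σ.symm (fun _ => by simp) (fun _ => by simp) (fun _ _ => by simp)
    (fun _ _ => by simp)

lemma List.formPerm_four {α : Type*} [DecidableEq α] {a b c d : α} (h : [a, b, c, d].Nodup) :
    [a, b, c, d].formPerm a = b ∧ [a, b, c, d].formPerm b = c ∧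
      [a, b, c, d].formPerm c = d ∧ [a, b, c, d].formPerm d = a := by
  simp only [List.nodup_cons, List.mem_cons, List.not_mem_nil, or_false, not_or,
    not_false_eq_true, List.nodup_nil, and_self, and_true] at h
  obtain ⟨⟨hab, hac, had⟩, ⟨hbc, hbd⟩, hcd⟩ := h
  simp [List.formPerm_cons_cons, swap_apply_of_ne_of_ne, *, Ne.symm hac, Ne.symm had,
    Ne.symm hbc, Ne.symm hbd, Ne.symm hcd]

lemma div_sum_bounds_of_forall_mul_le {ι : Type*} {s : Finset ι} {f : ι → ℝ} {L R : ℝ}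
    (hL : 0 < L) (hR : 0 < R) (hf : ∀ i ∈ s, ∀ j ∈ s, f i * L ≤ f j * R)
    (hsum : 0 < ∑ i ∈ s, f i) {v : ι} (hv : v ∈ s) :
    L / (R * #s) ≤ f v / ∑ i ∈ s, f i ∧ f v / ∑ i ∈ s, f i ≤ R / (L * #s) := by
  have hs : (0 : ℝ) < #s := by exact_mod_cast card_pos.mpr ⟨v, hv⟩
  have hup : (∑ i ∈ s, f i) * L ≤ #s * (f v * R) := by
    rw [sum_mul, ← nsmul_eq_mul, ← sum_const]
    exact sum_le_sum fun i hi => hf i hi v hv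
  have hlo : #s * (f v * L) ≤ (∑ i ∈ s, f i) * R := by
    rw [sum_mul, ← nsmul_eq_mul, ← sum_const]
    exact sum_le_sum fun i hi => hf v hv i hi
  constructor
  · rw [div_le_div_iff₀ (by positivity) hsum]; linarith
  · rw [div_le_div_iff₀ hsum (by positivity)]; linarith

section Regularity

variable {n : ℕ} {E : Fin n → Fin n → Prop} {ε d : ℝ} {A B : Finset (Fin n)}

open Classical in
noncomputable def edgesBetween (E : Fin n → Fin n → Prop) (A B : Finset (Fin n)) :
    Finset (Fin n × Fin n) :=
  (A ×ˢ B).filter fun p => E p.1 p.2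

@[simp]
lemma mem_edgesBetween {p : Fin n × Fin n} :
    p ∈ edgesBetween E A B ↔ p.1 ∈ A ∧ p.2 ∈ B ∧ E p.1 p.2 := by
  simp [edgesBetween, and_assoc]

lemma BipRegular.card_edgesBetween_bounds (hE : BipRegular n E ε d)
    (hA : ε * n < #A) (hB : ε * n < #B) :
    (d - ε) * #A * #B ≤ #(edgesBetween E A B) ∧
      (#(edgesBetween E A B) : ℝ) ≤ (d + ε) * #A * #B := by
  have hdens := hE A B hA hB
  have hε : 0 ≤ ε := (abs_nonneg _).trans hdens
  have hAB : (0 : ℝ) < #A * #B := by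
    have : (0 : ℝ) < #A := lt_of_le_of_lt (by positivity) hA
    have : (0 : ℝ) < #B := lt_of_le_of_lt (by positivity) hB
    positivity
  change |(#(edgesBetween E A B) : ℝ) / (#A * #B) - d| ≤ ε at hdens
  rw [abs_le, le_sub_iff_add_le, sub_le_iff_le_add, le_div_iff₀ hAB, div_le_iff₀ hAB] at hdens
  constructor <;> linarith [hdens.1, hdens.2]

lemma BipRegular.exists_adj (hE : BipRegular n E ε d) (hεd : ε < d)
    (hA : ε * n < #A) (hB : ε * n < #B) : ∃ a ∈ A, ∃ b ∈ B, E a b := by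
  have hε : 0 ≤ ε := (abs_nonneg _).trans (hE A B hA hB)
  have hA0 : (0 : ℝ) < #A := lt_of_le_of_lt (by positivity) hA
  have hB0 : (0 : ℝ) < #B := lt_of_le_of_lt (by positivity) hB
  have hdε : 0 < d - ε := sub_pos.mpr hεd
  have hpos : (0 : ℝ) < #(edgesBetween E A B) :=
    (by positivity : (0 : ℝ) < (d - ε) * #A * #B).trans_le
      (hE.card_edgesBetween_bounds hA hB).1
  obtain ⟨⟨a, b⟩, hab⟩ := card_pos.mp (by exact_mod_cast hpos)
  rw [mem_edgesBetween] at hab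
  exact ⟨a, hab.1, b, hab.2.1, hab.2.2⟩

lemma BipSuperRegular.nonneg (hE : BipSuperRegular n E ε d) (u : Fin n) : 0 ≤ ε := by
  have hn : (0 : ℝ) < n := by exact_mod_cast u.pos
  exact nonneg_of_mul_nonneg_left ((abs_nonneg _).trans (hE.2.1 u)) hn

lemma BipSuperRegular.degR_bounds (hE : BipSuperRegular n E ε d) (u : Fin n) :
    (d - ε) * n ≤ degR n E u ∧ (degR n E u : ℝ) ≤ (d + ε) * n := by
  have := abs_le.mp (hE.2.1 u)
  constructor <;> linarith [this.1, this.2]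

lemma BipSuperRegular.degL_bounds (hE : BipSuperRegular n E ε d) (w : Fin n) :
    (d - ε) * n ≤ degL n E w ∧ (degL n E w : ℝ) ≤ (d + ε) * n := by
  have := abs_le.mp (hE.2.2 w)
  constructor <;> linarith [this.1, this.2]

open Classical in
/-- Hall's condition. A set `S` with `|S| ≤ ε n` is covered by the neighbourhood of any of its
vertices. Otherwise regularity leaves at most `ε n` vertices outside the neighbourhood `V` of
`S`, and a vertex outside `V` has `(d - ε) n` neighbours, all outside `S`. -/
lemma BipSuperRegular.card_le_card_biUnion (hE : BipSuperRegular n E ε d) (hεd : 2 * ε < d)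
    (S : Finset (Fin n)) : #S ≤ #(S.biUnion fun u => univ.filter (E u ·)) := by
  set V := S.biUnion fun u => univ.filter (E u ·)
  rcases S.eq_empty_or_nonempty with rfl | ⟨u, hu⟩
  · simp
  have hε := hE.nonneg u
  have hV : (#Vᶜ : ℝ) + #V = n := by
    exact_mod_cast (card_compl_add_card V).trans (Fintype.card_fin n)
  have hSV : ∀ a ∈ S, ∀ b ∈ Vᶜ, ¬E a b := fun a ha b hb hab =>
    mem_compl.mp hb (mem_biUnion.mpr ⟨a, ha, by simpa using hab⟩)
  suffices (#S : ℝ) ≤ #V by exact_mod_cast this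
  by_cases hS : (#S : ℝ) ≤ ε * n
  · calc (#S : ℝ) ≤ ε * n := hS
      _ ≤ (d - ε) * n := by gcongr; linarith
      _ ≤ degR n E u := (hE.degR_bounds u).1
      _ ≤ #V := by
        exact_mod_cast card_le_card (subset_biUnion_of_mem (fun u => univ.filter (E u ·)) hu)
  have hVc : (#Vᶜ : ℝ) ≤ ε * n := by
    by_contra hVc
    obtain ⟨a, ha, b, hb, hab⟩ := hE.1.exists_adj (by linarith) (not_le.mp hS) (not_le.mp hVc)
    exact hSV a ha b hb hab
  rcases Vᶜ.eq_empty_or_nonempty with hVc0 | ⟨w, hw⟩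
  · rw [hVc0, card_empty, Nat.cast_zero, zero_add] at hV
    rw [hV]
    exact_mod_cast (card_le_univ S).trans (Fintype.card_fin n).le
  have hwS : degL n E w ≤ #Sᶜ :=
    card_le_card fun a ha => mem_compl.mpr fun haS => hSV a haS w hw (by simpa using ha)
  have hS' : (degL n E w : ℝ) + #S ≤ n := by
    exact_mod_cast (Nat.add_le_add_right hwS _).trans_eq
      ((card_compl_add_card S).trans (Fintype.card_fin n))
  nlinarith [(hE.degL_bounds w).1]

lemma BipSuperRegular.matchings_nonempty (hE : BipSuperRegular n E ε d) (hεd : 2 * ε < d) :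
    (matchings n E).Nonempty := by
  classical
  obtain ⟨f, hf, hfE⟩ :=
    (all_card_le_biUnion_card_iff_exists_injective _).mp (hE.card_le_card_biUnion hεd)
  refine ⟨Equiv.ofBijective f hf.bijective_of_finite, ?_⟩
  simpa [matchings] using hfE

end Regularity

section Switching

variable {n : ℕ} {E : Fin n → Fin n → Prop} {ε d : ℝ}

lemma mem_matchings {σ : Perm (Fin n)} : σ ∈ matchings n E ↔ ∀ i, E i (σ i) := by
  simp [matchings]

open Classical in
/-- The pairs `(y, z)` for which `a, σ y, y, z, σ⁻¹ z, b` is a path alternating between edges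
of `E` and edges of the matching `σ`. -/
noncomputable def altPaths (E : Fin n → Fin n → Prop) (σ : Perm (Fin n)) (a b : Fin n) :
    Finset (Fin n × Fin n) :=
  edgesBetween E (univ.filter fun y => E a (σ y)) (univ.filter fun z => E (σ⁻¹ z) b)

@[simp]
lemma mem_altPaths {σ : Perm (Fin n)} {a b : Fin n} {p : Fin n × Fin n} :
    p ∈ altPaths E σ a b ↔ E a (σ p.1) ∧ E p.1 p.2 ∧ E (σ⁻¹ p.2) b := by
  simp only [altPaths, mem_edgesBetween, mem_filter, mem_univ, true_and]
  tauto

lemma BipSuperRegular.card_altPaths_bounds (hE : BipSuperRegular n E ε d) (hεd : 2 * ε < d)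
    (σ : Perm (Fin n)) (a b : Fin n) :
    (d - ε) ^ 3 * n ^ 2 ≤ #(altPaths E σ a b) ∧
      (#(altPaths E σ a b) : ℝ) ≤ (d + ε) ^ 3 * n ^ 2 := by
  classical
  have hε := hE.nonneg a
  have hn : (0 : ℝ) < n := by exact_mod_cast a.pos
  have hdε : 0 ≤ d - ε := by linarith
  have hdε' : 0 ≤ d + ε := by linarith
  have hA : #(univ.filter fun y => E a (σ y)) = degR n E a := by
    rw [card_filter_perm_apply σ (E a)]; rfl
  have hB : #(univ.filter fun z => E (σ⁻¹ z) b) = degL n E b := by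
    rw [card_filter_perm_apply σ⁻¹ (E · b)]; rfl
  have hεn : ε * n < (d - ε) * n := by nlinarith
  obtain ⟨hAlo, hAhi⟩ := hE.degR_bounds a
  obtain ⟨hBlo, hBhi⟩ := hE.degL_bounds b
  obtain ⟨hlo, hhi⟩ := hE.1.card_edgesBetween_bounds (A := univ.filter fun y => E a (σ y))
    (B := univ.filter fun z => E (σ⁻¹ z) b) (by rw [hA]; linarith) (by rw [hB]; linarith)
  rw [hA, hB] at hlo hhi
  constructor
  · calc (d - ε) ^ 3 * n ^ 2 = (d - ε) * ((d - ε) * n) * ((d - ε) * n) := by ring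
      _ ≤ (d - ε) * degR n E a * degL n E b := by gcongr
      _ ≤ _ := hlo
  · calc _ ≤ (d + ε) * degR n E a * degL n E b := hhi
      _ ≤ (d + ε) * ((d + ε) * n) * ((d + ε) * n) := by gcongr
      _ = (d + ε) ^ 3 * n ^ 2 := by ring

open Classical in
noncomputable def switchPairs (E : Fin n → Fin n → Prop) (σ : Perm (Fin n)) (v w : Fin n) :
    Finset (Fin n × Fin n) :=
  (altPaths E σ (σ⁻¹ w) v).filter fun p => [v, w, σ p.1, p.2].Nodup

/-- A degenerate pair has `y ∈ σ⁻¹ {v, w}`, `z ∈ {v, w}` or `z = σ y`: at most `5 n` pairs. -/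
lemma card_altPaths_le_card_switchPairs_add (σ : Perm (Fin n)) {v w : Fin n} (hvw : v ≠ w) :
    #(altPaths E σ (σ⁻¹ w) v) ≤ #(switchPairs E σ v w) + 5 * n := by
  classical
  set D := ({σ⁻¹ v, σ⁻¹ w} ×ˢ univ ∪ univ ×ˢ {v, w}) ∪ univ.image fun i => (i, σ i)
  have hD : #D ≤ 5 * n := by
    calc #D ≤ #({σ⁻¹ v, σ⁻¹ w} : Finset (Fin n)) * n + n * #({v, w} : Finset (Fin n)) + n := by
          refine (card_union_le _ _).trans (add_le_add ((card_union_le _ _).trans ?_) ?_)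
          · simp [card_product]
          · exact card_image_le.trans (by simp)
      _ ≤ 2 * n + n * 2 + n := by gcongr <;> exact card_le_two
      _ = 5 * n := by ring
  have hsub : (altPaths E σ (σ⁻¹ w) v).filter (fun p => ¬[v, w, σ p.1, p.2].Nodup) ⊆ D := by
    rintro ⟨y, z⟩ hp
    simp only [mem_filter, List.nodup_cons, List.mem_cons, List.not_mem_nil, or_false,
      List.nodup_nil, and_true, not_and, not_not] at hp
    simp only [D, mem_union, mem_product, mem_insert, mem_singleton, mem_univ, and_true,
      true_and, mem_image, Prod.mk.injEq, exists_eq_left, Perm.eq_inv_iff_eq]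
    tauto
  calc #(altPaths E σ (σ⁻¹ w) v)
      = #(switchPairs E σ v w) + #((altPaths E σ (σ⁻¹ w) v).filter
          (fun p => ¬[v, w, σ p.1, p.2].Nodup)) := (card_filter_add_card_filter_not _).symm
    _ ≤ #(switchPairs E σ v w) + 5 * n := by gcongr; exact (card_le_card hsub).trans hD

/-- Replaces the edges `σ⁻¹ v ↦ v`, `σ⁻¹ w ↦ w`, `y ↦ σ y`, `σ⁻¹ z ↦ z` of the matching `σ` by
`σ⁻¹ v ↦ w`, `σ⁻¹ w ↦ σ y`, `y ↦ z`, `σ⁻¹ z ↦ v`. -/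
def switch {α : Type*} [DecidableEq α] (σ : Perm α) (v w : α) (p : α × α) : Perm α :=
  [v, w, σ p.1, p.2].formPerm * σ

lemma switch_spec {σ : Perm (Fin n)} {v w : Fin n} {p : Fin n × Fin n}
    (hσ : σ ∈ matchings n E) (hw : E (σ⁻¹ v) w) (hp : p ∈ switchPairs E σ v w) :
    switch σ v w p ∈ matchings n E ∧ switch σ v w p (σ⁻¹ v) = w ∧ switch σ v w p p.1 = p.2 ∧
      (p.1, σ p.1) ∈ altPaths E (switch σ v w p) ((switch σ v w p)⁻¹ v) w := by
  classical
  obtain ⟨y, z⟩ := p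
  simp only [switchPairs, mem_filter, mem_altPaths] at hp
  obtain ⟨⟨hwy, hyz, hzv⟩, hnd⟩ := hp
  rw [mem_matchings] at hσ ⊢
  obtain ⟨hv', hw', hy', hz'⟩ := List.formPerm_four hnd
  set τ := switch σ v w (y, z)
  have hσσ : ∀ x, σ (σ⁻¹ x) = x := fun _ => Perm.eq_inv_iff_eq.mp rfl
  have hτ : ∀ i, τ i = [v, w, σ y, z].formPerm (σ i) := fun _ => rfl
  have hτv : τ (σ⁻¹ v) = w := by rw [hτ, hσσ, hv']
  have hτw : τ (σ⁻¹ w) = σ y := by rw [hτ, hσσ, hw']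
  have hτy : τ y = z := by rw [hτ, hy']
  have hτz : τ (σ⁻¹ z) = v := by rw [hτ, hσσ, hz']
  have hσedge : ∀ x, E (σ⁻¹ x) x := fun x => by simpa only [hσσ] using hσ (σ⁻¹ x)
  refine ⟨fun i => ?_, hτv, hτy, ?_⟩
  · by_cases hi : σ i ∈ [v, w, σ y, z]
    · simp only [List.mem_cons, List.not_mem_nil, or_false] at hi
      rcases hi with hi | hi | hi | hi
      · rwa [Perm.eq_inv_iff_eq.mpr hi, hτv]
      · rwa [Perm.eq_inv_iff_eq.mpr hi, hτw]
      · rwa [σ.injective hi, hτy]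
      · rwa [Perm.eq_inv_iff_eq.mpr hi, hτz]
    · rw [hτ, List.formPerm_apply_of_notMem hi]
      exact hσ i
  · rw [mem_altPaths, Perm.inv_eq_iff_eq.mpr hτz.symm, hτy, Perm.inv_eq_iff_eq.mpr hτw.symm]
    exact ⟨hσedge z, hσ y, hσedge w⟩

/-- `(σ, (y, z)) ↦ (switch σ v w (y, z), (y, σ y))` is injective: `z` is recovered as the new
image of `y`, and then `σ` from the 4-cycle `v → w → σ y → z → v`. -/
lemma card_sigma_switchPairs_le {u v w : Fin n} (huw : E u w) :
    #(((matchings n E).filter fun σ => σ u = v).sigma fun σ => switchPairs E σ v w) ≤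
      #(((matchings n E).filter fun τ => τ u = w).sigma fun τ => altPaths E τ (τ⁻¹ v) w) := by
  have spec : ∀ {σ : Perm (Fin n)} {p : Fin n × Fin n}, σ ∈ matchings n E → σ u = v →
      p ∈ switchPairs E σ v w → switch σ v w p ∈ matchings n E ∧ switch σ v w p u = w ∧
        switch σ v w p p.1 = p.2 ∧
        (p.1, σ p.1) ∈ altPaths E (switch σ v w p) ((switch σ v w p)⁻¹ v) w := by
    intro σ p hσ hσu hp
    obtain rfl : u = σ⁻¹ v := Perm.eq_inv_iff_eq.mpr hσu
    exact switch_spec hσ huw hp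
  refine card_le_card_of_injOn (fun q => ⟨switch q.1 v w q.2, (q.2.1, q.1 q.2.1)⟩) ?_ ?_
  · rintro ⟨σ, p⟩ hq
    simp only [coe_sigma, Set.mem_sigma_iff, coe_filter, Set.mem_ofPred_eq, mem_coe] at hq ⊢
    obtain ⟨⟨hσ, hσu⟩, hp⟩ := hq
    obtain ⟨hτ, hτu, -, hpath⟩ := spec hσ hσu hp
    exact ⟨⟨hτ, hτu⟩, hpath⟩
  · rintro ⟨σ, y, z⟩ hq ⟨σ', y', z'⟩ hq' heq
    simp only [coe_sigma, Set.mem_sigma_iff, coe_filter, Set.mem_ofPred_eq, mem_coe] at hq hq'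
    simp only [Sigma.mk.injEq, heq_eq_eq, Prod.mk.injEq] at heq
    obtain ⟨hτ, rfl, hσy⟩ := heq
    have hz : z = z' := calc
      z = switch σ v w (y, z) y := (spec hq.1.1 hq.1.2 hq.2).2.2.1.symm
      _ = switch σ' v w (y, z') y := by rw [hτ]
      _ = z' := (spec hq'.1.1 hq'.1.2 hq'.2).2.2.1
    subst hz
    have : σ = σ' := by
      unfold switch at hτ
      rw [hσy] at hτ
      exact mul_left_cancel hτ
    subst this
    rfl

lemma BipSuperRegular.card_filter_apply_eq_mul_le (hE : BipSuperRegular n E ε d)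
    (hεd : 2 * ε < d) {u v w : Fin n} (huw : E u w) (hvw : v ≠ w) :
    #((matchings n E).filter fun σ => σ u = v) * ((d - ε) ^ 3 * n ^ 2 - 5 * n) ≤
      #((matchings n E).filter fun σ => σ u = w) * ((d + ε) ^ 3 * n ^ 2 : ℝ) := by
  calc #((matchings n E).filter fun σ => σ u = v) * ((d - ε) ^ 3 * n ^ 2 - 5 * n)
      = ∑ σ ∈ (matchings n E).filter (· u = v), ((d - ε) ^ 3 * n ^ 2 - 5 * n : ℝ) := by
        rw [sum_const, nsmul_eq_mul]
    _ ≤ ∑ σ ∈ (matchings n E).filter (· u = v), (#(switchPairs E σ v w) : ℝ) := by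
        refine sum_le_sum fun σ _ => ?_
        have h : (#(altPaths E σ (σ⁻¹ w) v) : ℝ) ≤ #(switchPairs E σ v w) + 5 * n := by
          exact_mod_cast card_altPaths_le_card_switchPairs_add σ hvw
        linarith [(hE.card_altPaths_bounds hεd σ (σ⁻¹ w) v).1]
    _ ≤ ∑ τ ∈ (matchings n E).filter (· u = w), (#(altPaths E τ (τ⁻¹ v) w) : ℝ) := by
        simp only [← Nat.cast_sum, ← card_sigma]
        exact_mod_cast card_sigma_switchPairs_le huw
    _ ≤ ∑ τ ∈ (matchings n E).filter (· u = w), ((d + ε) ^ 3 * n ^ 2 : ℝ) :=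
        sum_le_sum fun τ _ => (hE.card_altPaths_bounds hεd τ (τ⁻¹ v) w).2
    _ = _ := by rw [sum_const, nsmul_eq_mul]

end Switching

lemma add_pow_three_mul_le {d ε t : ℝ} (hd : 0 < d) (ht0 : 0 ≤ t) (ht1 : t ≤ 1)
    (hε0 : 0 ≤ ε) (hε : ε ≤ t * d / 1000) :
    (d + ε) ^ 3 * d ≤ (1 + t) * (1 - t / 100) * (d - ε) ^ 4 := by
  have hnum : (1 + t / 1000) ^ 3 ≤ (1 + t) * (1 - t / 100) * (1 - t / 1000) ^ 4 := by
    nlinarith [sq_nonneg t, mul_nonneg ht0 ht0, pow_le_one₀ ht0 ht1 (n := 4),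
      mul_nonneg (mul_nonneg ht0 ht0) ht0, sq_nonneg (t * (1 - t))]
  have hc : 0 ≤ (1 + t) * (1 - t / 100) := by nlinarith
  calc (d + ε) ^ 3 * d ≤ (d * (1 + t / 1000)) ^ 3 * d := by gcongr; linarith
    _ = d ^ 4 * (1 + t / 1000) ^ 3 := by ring
    _ ≤ d ^ 4 * ((1 + t) * (1 - t / 100) * (1 - t / 1000) ^ 4) := by gcongr
    _ = (1 + t) * (1 - t / 100) * (d * (1 - t / 1000)) ^ 4 := by ring
    _ ≤ (1 + t) * (1 - t / 100) * (d - ε) ^ 4 := by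
        have : 0 ≤ d * (1 - t / 1000) := by nlinarith
        gcongr; linarith

lemma one_sub_mul_add_pow_four_le {d ε t : ℝ} (hd : 0 < d) (ht0 : 0 ≤ t) (ht1 : t ≤ 1)
    (hε0 : 0 ≤ ε) (hε : ε ≤ t * d / 1000) :
    (1 - t) * (d + ε) ^ 4 ≤ (1 - t / 100) * (d - ε) ^ 3 * d := by
  have hnum : (1 - t) * (1 + t / 1000) ^ 4 ≤ (1 - t / 100) * (1 - t / 1000) ^ 3 := by
    nlinarith [sq_nonneg t, sq_nonneg (1 - t), mul_nonneg ht0 ht0, sq_nonneg (t * (1 - t))]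
  calc (1 - t) * (d + ε) ^ 4 ≤ (1 - t) * (d * (1 + t / 1000)) ^ 4 := by
        have : 0 ≤ 1 - t := by linarith
        gcongr; linarith
    _ = d ^ 4 * ((1 - t) * (1 + t / 1000) ^ 4) := by ring
    _ ≤ d ^ 4 * ((1 - t / 100) * (1 - t / 1000) ^ 3) := by gcongr
    _ = (1 - t / 100) * (d * (1 - t / 1000)) ^ 3 * d := by ring
    _ ≤ (1 - t / 100) * (d - ε) ^ 3 * d := by
        have : 0 ≤ d * (1 - t / 1000) := by nlinarith
        have : 0 ≤ 1 - t / 100 := by linarith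
        gcongr; linarith

/-- Summing the switching inequality over the neighbours `w` of `u`. -/
lemma BipSuperRegular.card_filter_apply_eq_div_card_bounds_of_pos {n : ℕ}
    {E : Fin n → Fin n → Prop} {ε d : ℝ} (hE : BipSuperRegular n E ε d) (hεd : 2 * ε < d)
    (hL : 0 < (d - ε) ^ 3 * n ^ 2 - 5 * n) {u v : Fin n} (huv : E u v) :
    ((d - ε) ^ 3 * n ^ 2 - 5 * n) / ((d + ε) ^ 3 * n ^ 2 * degR n E u) ≤
        (#((matchings n E).filter fun σ => σ u = v) : ℝ) / #(matchings n E) ∧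
      (#((matchings n E).filter fun σ => σ u = v) : ℝ) / #(matchings n E) ≤
        (d + ε) ^ 3 * n ^ 2 / (((d - ε) ^ 3 * n ^ 2 - 5 * n) * degR n E u) := by
  classical
  have hε := hE.nonneg u
  have hLR : (d - ε) ^ 3 * n ^ 2 - 5 * n ≤ (d + ε) ^ 3 * n ^ 2 := by
    have : (d - ε) ^ 3 ≤ (d + ε) ^ 3 := pow_le_pow_left₀ (by linarith) (by linarith) 3
    nlinarith
  set N := univ.filter (E u ·)
  set f : Fin n → ℝ := fun z => #((matchings n E).filter fun σ => σ u = z)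
  have hM : (#(matchings n E) : ℝ) = ∑ z ∈ N, f z := by
    rw [card_eq_sum_card_fiberwise (f := fun σ : Perm (Fin n) => σ u) (t := N)]
    · push_cast; rfl
    · intro σ hσ
      simpa [N] using mem_matchings.mp hσ u
  have hpair : ∀ i ∈ N, ∀ j ∈ N,
      f i * ((d - ε) ^ 3 * n ^ 2 - 5 * n) ≤ f j * ((d + ε) ^ 3 * n ^ 2) := by
    intro i hi j hj
    rcases eq_or_ne i j with rfl | hij
    · gcongr
    · exact hE.card_filter_apply_eq_mul_le hεd (by simpa [N] using hj) hij
  have hMpos : (0 : ℝ) < #(matchings n E) := by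
    exact_mod_cast card_pos.mpr (hE.matchings_nonempty hεd)
  rw [hM]
  exact div_sum_bounds_of_forall_mul_le hL (hL.trans_le hLR) hpair (hM ▸ hMpos)
    (by simpa [N] using huv)

theorem BipSuperRegular.card_filter_apply_eq_div_card_bounds {n : ℕ} {E : Fin n → Fin n → Prop}
    {ε d t : ℝ} (hE : BipSuperRegular n E ε d) (hd : 0 < d) (ht0 : 0 ≤ t) (ht1 : t ≤ 1)
    (hεt : ε ≤ t * d / 1000) (hn : 5 ≤ t / 100 * (d - ε) ^ 3 * n) {u v : Fin n} (huv : E u v) :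
    (1 - t) * (1 / (d * n)) ≤
        (#((matchings n E).filter fun σ => σ u = v) : ℝ) / #(matchings n E) ∧
      (#((matchings n E).filter fun σ => σ u = v) : ℝ) / #(matchings n E) ≤
        (1 + t) * (1 / (d * n)) := by
  have hε := hE.nonneg u
  have hεd : 2 * ε < d := by nlinarith
  have hdε : 0 < d - ε := by linarith
  have ht100 : 0 < 1 - t / 100 := by linarith
  have hn0 : (0 : ℝ) < n := by exact_mod_cast u.pos
  have hdn : 0 < d * n := by positivity
  set L : ℝ := (d - ε) ^ 3 * n ^ 2 - 5 * n
  set R : ℝ := (d + ε) ^ 3 * n ^ 2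
  have hLlo : (1 - t / 100) * ((d - ε) ^ 3 * n ^ 2) ≤ L := by nlinarith
  have hL : 0 < L := lt_of_lt_of_le (by positivity) hLlo
  obtain ⟨hdeglo, hdeghi⟩ := hE.degR_bounds u
  have hdeg : (0 : ℝ) < degR n E u := lt_of_lt_of_le (by positivity) hdeglo
  obtain ⟨hlo, hhi⟩ := hE.card_filter_apply_eq_div_card_bounds_of_pos hεd hL huv
  constructor
  · refine le_trans ?_ hlo
    rw [mul_one_div, div_le_div_iff₀ hdn (by positivity)]
    calc (1 - t) * (R * degR n E u) ≤ (1 - t) * ((d + ε) ^ 3 * n ^ 2 * ((d + ε) * n)) := by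
          have : 0 ≤ 1 - t := by linarith
          gcongr
      _ = (1 - t) * (d + ε) ^ 4 * n ^ 3 := by ring
      _ ≤ (1 - t / 100) * (d - ε) ^ 3 * d * n ^ 3 := by
          gcongr ?_ * _; exact one_sub_mul_add_pow_four_le hd ht0 ht1 hε hεt
      _ = (1 - t / 100) * ((d - ε) ^ 3 * n ^ 2) * (d * n) := by ring
      _ ≤ L * (d * n) := by gcongr
  · refine hhi.trans ?_
    rw [mul_one_div, div_le_div_iff₀ (by positivity) hdn]
    calc R * (d * n) = (d + ε) ^ 3 * d * n ^ 3 := by ring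
      _ ≤ (1 + t) * (1 - t / 100) * (d - ε) ^ 4 * n ^ 3 := by
          gcongr ?_ * _; exact add_pow_three_mul_le hd ht0 ht1 hε hεt
      _ = (1 + t) * ((1 - t / 100) * ((d - ε) ^ 3 * n ^ 2) * ((d - ε) * n)) := by ring
      _ ≤ (1 + t) * (L * degR n E u) := by gcongr

lemma le_rpow_mul_of_le_sq {ε c : ℝ} (hε : 0 < ε) (hc0 : 0 ≤ c) (hc1 : c ≤ 1) (h : ε ≤ c ^ 2) :
    ε ≤ ε ^ ((1 : ℝ) / 20) * c := by
  have hε1 : ε ≤ 1 := h.trans (pow_le_one₀ hc0 hc1)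
  calc ε = ε ^ ((1 : ℝ) / 20) * ε ^ ((19 : ℝ) / 20) := by
        rw [← Real.rpow_add hε]; norm_num
    _ ≤ ε ^ ((1 : ℝ) / 20) * ε ^ ((1 : ℝ) / 2) := by
        gcongr ?_ * ?_
        exact Real.rpow_le_rpow_of_exponent_ge hε hε1 (by norm_num)
    _ ≤ ε ^ ((1 : ℝ) / 20) * c := by
        gcongr
        rw [← Real.sqrt_eq_rpow, ← Real.sqrt_sq hc0]
        exact Real.sqrt_le_sqrt h

theorem stmt10 (d : ℝ) (hd0 : 0 < d) (hd1 : d ≤ 1) :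
    ∃ ε₀ : ℝ, 0 < ε₀ ∧ ∀ ε : ℝ, 0 < ε → ε ≤ ε₀ → ∃ n₀ : ℕ, ∀ n : ℕ, n₀ ≤ n →
    ∀ E : Fin n → Fin n → Prop, BipSuperRegular n E ε d →
    ∀ u v : Fin n, E u v →
      (1 - ε ^ ((1:ℝ)/20)) * (1 / (d * n)) ≤
        (((matchings n E).filter fun σ => σ u = v).card : ℝ) / ((matchings n E).card : ℝ) ∧
      (((matchings n E).filter fun σ => σ u = v).card : ℝ) / ((matchings n E).card : ℝ) ≤
        (1 + ε ^ ((1:ℝ)/20)) * (1 / (d * n)) := by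
  refine ⟨(d / 1000) ^ 2, by positivity, fun ε hε hε₀ =>
    ⟨⌈4000 / (ε ^ ((1 : ℝ) / 20) * d ^ 3)⌉₊, fun n hn E hE u v huv => ?_⟩⟩
  set t := ε ^ ((1 : ℝ) / 20)
  have ht0 : 0 < t := Real.rpow_pos_of_pos hε _
  have hεt : ε ≤ t * d / 1000 := by
    rw [mul_div_assoc]
    exact le_rpow_mul_of_le_sq hε (by positivity) (by linarith) hε₀
  have ht1 : t ≤ 1 :=
    Real.rpow_le_one hε.le (hε₀.trans (pow_le_one₀ (by positivity) (by linarith))) (by norm_num)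
  have hn5 : 5 ≤ t / 100 * (d - ε) ^ 3 * n := by
    have hd2 : d / 2 ≤ d - ε := by nlinarith
    calc (5 : ℝ) = t / 100 * (d / 2) ^ 3 * (4000 / (t * d ^ 3)) := by field_simp; norm_num
      _ ≤ t / 100 * (d - ε) ^ 3 * n := by
          have : 0 ≤ d - ε := by linarith
          gcongr
          exact Nat.ceil_le.mp hn
  exact hE.card_filter_apply_eq_div_card_bounds hd0 ht0.le ht1 hεt hn5 huv
end

section
/- Suppose 0 < 1/n ≪ 1/s ≪ 1/Δ, r, s, k, n are positive integers, and M is a real number with M ≤ 2Δs and M + s^{2/3} + 1 ≤ k < n/2 for a positive integer k. Let H be a bipartite graph with parts V₁, V₂ of size n each, such that every vertex x satisfies M - s^{2/3} - 1 ≤ d_H(x) ≤ M + s^{2/3}. Then there exists a k-regular bipartite graph H' on the same parts with H ⊆ H'. -/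
open Finset

/-!
Let `D = min k (2Δs + s + 1)`: every degree of `H` is below `D`, and `D` does not grow with `n`.
First complete `H` to a `D`-regular graph, one edge at a time. If a left vertex `u` is deficient,
so is some right vertex `w`. Either some deficient `a` is not joined to `w`, and `aw` is added, or
every non-neighbour of `w` is full; then, as `n > D² + D`, some edge `ab ∉ H` with `a ≁ w` and
`u ≁ b` can be switched for `ub` and `aw`. Then raise the degree from `D` to `k` one step at a
time: the complement of a `j`-regular bipartite graph is `(n - j)`-regular, so by Hall's theorem
it contains a perfect matching, and adding it gives a `(j + 1)`-regular graph.
-/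

namespace Bipartite

variable {V : Type*} [DecidableEq V] {G H E : Finset (V × V)} {D : ℕ} {p : V × V} {u w : V}

section

variable [Fintype V]

def leftDeg (G : Finset (V × V)) (a : V) : ℕ := #{b | (a, b) ∈ G}

def rightDeg (G : Finset (V × V)) (b : V) : ℕ := #{a | (a, b) ∈ G}

def IsRegular (G : Finset (V × V)) (d : ℕ) : Prop :=
  (∀ a, leftDeg G a = d) ∧ ∀ b, rightDeg G b = d

lemma leftDeg_eq_card_filter (G : Finset (V × V)) (a : V) :
    leftDeg G a = #{e ∈ G | e.1 = a} :=
  card_nbij' (fun b => (a, b)) Prod.snd (fun b hb => by simpa using hb)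
    (fun _ he => by obtain ⟨h, rfl⟩ := mem_filter.1 he; simpa using h)
    (fun _ _ => rfl) (fun _ he => by obtain ⟨-, rfl⟩ := mem_filter.1 he; rfl)

lemma rightDeg_eq_card_filter (G : Finset (V × V)) (b : V) :
    rightDeg G b = #{e ∈ G | e.2 = b} :=
  card_nbij' (fun a => (a, b)) Prod.fst (fun a ha => by simpa using ha)
    (fun _ he => by obtain ⟨h, rfl⟩ := mem_filter.1 he; simpa using h)
    (fun _ _ => rfl) (fun _ he => by obtain ⟨-, rfl⟩ := mem_filter.1 he; rfl)

lemma sum_leftDeg (G : Finset (V × V)) : ∑ a, leftDeg G a = #G := by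
  simp_rw [leftDeg_eq_card_filter]
  exact (card_eq_sum_card_fiberwise fun _ _ => mem_univ _).symm

lemma sum_rightDeg (G : Finset (V × V)) : ∑ b, rightDeg G b = #G := by
  simp_rw [rightDeg_eq_card_filter]
  exact (card_eq_sum_card_fiberwise fun _ _ => mem_univ _).symm

lemma leftDeg_insert {e : V × V} (he : e ∉ G) (a : V) :
    leftDeg (insert e G) a = leftDeg G a + if e.1 = a then 1 else 0 := by
  rw [leftDeg_eq_card_filter, leftDeg_eq_card_filter, card_filter, card_filter, sum_insert he,
    add_comm]

lemma rightDeg_insert {e : V × V} (he : e ∉ G) (b : V) :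
    rightDeg (insert e G) b = rightDeg G b + if e.2 = b then 1 else 0 := by
  rw [rightDeg_eq_card_filter, rightDeg_eq_card_filter, card_filter, card_filter, sum_insert he,
    add_comm]

lemma leftDeg_erase {e : V × V} (he : e ∈ G) (a : V) :
    leftDeg (G.erase e) a + (if e.1 = a then 1 else 0) = leftDeg G a := by
  rw [leftDeg_eq_card_filter, leftDeg_eq_card_filter, card_filter, card_filter,
    sum_erase_add _ _ he]

lemma rightDeg_erase {e : V × V} (he : e ∈ G) (b : V) :
    rightDeg (G.erase e) b + (if e.2 = b then 1 else 0) = rightDeg G b := by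
  rw [rightDeg_eq_card_filter, rightDeg_eq_card_filter, card_filter, card_filter,
    sum_erase_add _ _ he]

lemma leftDeg_union (h : Disjoint G H) (a : V) :
    leftDeg (G ∪ H) a = leftDeg G a + leftDeg H a := by
  simp only [leftDeg_eq_card_filter, filter_union, card_union_of_disjoint (disjoint_filter_filter h)]

lemma rightDeg_union (h : Disjoint G H) (b : V) :
    rightDeg (G ∪ H) b = rightDeg G b + rightDeg H b := by
  simp only [rightDeg_eq_card_filter, filter_union,
    card_union_of_disjoint (disjoint_filter_filter h)]

lemma leftDeg_compl (G : Finset (V × V)) (a : V) :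
    leftDeg Gᶜ a = Fintype.card V - leftDeg G a := by
  simp only [leftDeg, mem_compl]
  have := card_filter_add_card_filter_not (s := univ) (fun b => (a, b) ∈ G)
  rw [card_univ] at this
  omega

lemma rightDeg_compl (G : Finset (V × V)) (b : V) :
    rightDeg Gᶜ b = Fintype.card V - rightDeg G b := by
  simp only [rightDeg, mem_compl]
  have := card_filter_add_card_filter_not (s := univ) (fun a => (a, b) ∈ G)
  rw [card_univ] at this
  omega

lemma forall_leftDeg_eq_iff (hG : ∀ a, leftDeg G a ≤ D) :
    (∀ a, leftDeg G a = D) ↔ #G = Fintype.card V * D := by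
  rw [← sum_leftDeg, ← card_univ, ← smul_eq_mul, ← sum_const,
    sum_eq_sum_iff_of_le fun a _ => hG a]
  simp

lemma forall_rightDeg_eq_iff (hG : ∀ b, rightDeg G b ≤ D) :
    (∀ b, rightDeg G b = D) ↔ #G = Fintype.card V * D := by
  rw [← sum_rightDeg, ← card_univ, ← smul_eq_mul, ← sum_const,
    sum_eq_sum_iff_of_le fun b _ => hG b]
  simp

end

def switch (G : Finset (V × V)) (p : V × V) (u w : V) : Finset (V × V) :=
  insert (u, p.2) (insert (p.1, w) (G.erase p))

lemma notMem_insert_erase_of_notMem (hp : p ∈ G) (hu : (u, p.2) ∉ G) :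
    (u, p.2) ∉ insert (p.1, w) (G.erase p) := by
  have hup : u ≠ p.1 := by rintro rfl; exact hu hp
  simp [hup, hu]

lemma card_switch (hp : p ∈ G) (hu : (u, p.2) ∉ G) (hw : (p.1, w) ∉ G) :
    #(switch G p u w) = #G + 1 := by
  have := card_pos.2 ⟨p, hp⟩
  rw [switch, card_insert_of_notMem (notMem_insert_erase_of_notMem hp hu),
    card_insert_of_notMem fun h => hw (mem_of_mem_erase h), card_erase_of_mem hp]
  omega

lemma subset_switch (hEG : E ⊆ G) (hpE : p ∉ E) : E ⊆ switch G p u w := fun _ he =>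
  mem_insert_of_mem <| mem_insert_of_mem <| mem_erase.2 ⟨ne_of_mem_of_not_mem he hpE, hEG he⟩

variable [Fintype V]

lemma leftDeg_switch (hp : p ∈ G) (hu : (u, p.2) ∉ G) (hw : (p.1, w) ∉ G) (a : V) :
    leftDeg (switch G p u w) a = leftDeg G a + if u = a then 1 else 0 := by
  rw [switch, leftDeg_insert (notMem_insert_erase_of_notMem hp hu),
    leftDeg_insert fun h => hw (mem_of_mem_erase h), ← leftDeg_erase hp a]

lemma rightDeg_switch (hp : p ∈ G) (hu : (u, p.2) ∉ G) (hw : (p.1, w) ∉ G) (b : V) :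
    rightDeg (switch G p u w) b = rightDeg G b + if w = b then 1 else 0 := by
  rw [switch, rightDeg_insert (notMem_insert_erase_of_notMem hp hu),
    rightDeg_insert fun h => hw (mem_of_mem_erase h), ← rightDeg_erase hp b, add_right_comm]

/- At least `n - D` vertices miss `w`, each full and hence with an edge outside `E`, while at most
`D²` edges of `G` end in the neighbourhood of `u`. -/
lemma exists_switchable_edge (hn : D * D + D < Fintype.card V)
    (hE : ∀ a, leftDeg E a < D) (hL : ∀ a, leftDeg G a ≤ D) (hR : ∀ b, rightDeg G b ≤ D)
    (hfull : ∀ a, (a, w) ∉ G → leftDeg G a = D) (u : V) :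
    ∃ p ∈ G, p ∉ E ∧ (u, p.2) ∉ G ∧ (p.1, w) ∉ G := by
  set S := {p ∈ G \ E | (p.1, w) ∉ G}
  set T := {p ∈ G | (u, p.2) ∈ G}
  have hS : Fintype.card V - D ≤ #S := by
    calc Fintype.card V - D ≤ Fintype.card V - rightDeg G w := by have := hR w; omega
      _ = rightDeg Gᶜ w := (rightDeg_compl G w).symm
      _ ≤ #(S.image Prod.fst) := card_le_card fun a ha => ?_
      _ ≤ #S := card_image_le
    replace ha : (a, w) ∉ G := by simpa using ha
    obtain ⟨b, hbG, hbE⟩ := exists_mem_notMem_of_card_lt_card ((hE a).trans_eq (hfull a ha).symm)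
    simp only [mem_filter, mem_univ, true_and] at hbG hbE
    exact mem_image.2 ⟨(a, b), by simp [S, hbG, hbE, ha], rfl⟩
  have hT : #T ≤ D * D := by
    calc #T ≤ D * #{b | (u, b) ∈ G} :=
          card_le_mul_card_image_of_maps_to (f := Prod.snd) (by simp +contextual [T]) D
            fun b _ => (card_le_card (filter_subset_filter _ (filter_subset _ _))).trans
              ((rightDeg_eq_card_filter G b).symm.trans_le (hR b))
      _ ≤ D * D := Nat.mul_le_mul_left D (hL u)
  by_contra! h
  have hST : S ⊆ T := fun p hp => by
    simp only [S, T, mem_filter, mem_sdiff] at hp ⊢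
    exact ⟨hp.1.1, by_contra fun hu => hp.2 (h p hp.1.1 hp.1.2 hu)⟩
  have := card_le_card hST
  omega

lemma exists_card_lt_of_leftDeg_lt (hn : D * D + D < Fintype.card V) (hE : ∀ a, leftDeg E a < D)
    (hEG : E ⊆ G) (hL : ∀ a, leftDeg G a ≤ D) (hR : ∀ b, rightDeg G b ≤ D)
    (hu : leftDeg G u < D) :
    ∃ G', E ⊆ G' ∧ (∀ a, leftDeg G' a ≤ D) ∧ (∀ b, rightDeg G' b ≤ D) ∧ #G < #G' := by
  obtain ⟨w, hw⟩ : ∃ w, rightDeg G w < D := by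
    by_contra! h
    have := (forall_leftDeg_eq_iff hL).2 <|
      (forall_rightDeg_eq_iff hR).1 fun b => (hR b).antisymm (h b)
    exact hu.ne (this u)
  by_cases hdef : ∃ a, (a, w) ∉ G ∧ leftDeg G a < D
  · obtain ⟨a, haw, ha⟩ := hdef
    refine ⟨insert (a, w) G, hEG.trans (subset_insert _ _), fun x => ?_, fun y => ?_, ?_⟩
    · rw [leftDeg_insert haw]
      split_ifs with h
      exacts [h ▸ ha, hL x]
    · rw [rightDeg_insert haw]
      split_ifs with h
      exacts [h ▸ hw, hR y]
    · rw [card_insert_of_notMem haw]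
      exact lt_add_one _
  · have hfull (a : V) (ha : (a, w) ∉ G) : leftDeg G a = D :=
      (hL a).eq_of_not_lt fun h => hdef ⟨a, ha, h⟩
    obtain ⟨p, hp, hpE, hpu, hpw⟩ := exists_switchable_edge hn hE hL hR hfull u
    refine ⟨switch G p u w, subset_switch hEG hpE, fun a => ?_, fun b => ?_, ?_⟩
    · rw [leftDeg_switch hp hpu hpw]
      split_ifs with h
      exacts [h ▸ hu, hL a]
    · rw [rightDeg_switch hp hpu hpw]
      split_ifs with h
      exacts [h ▸ hw, hR b]
    · rw [card_switch hp hpu hpw]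
      exact lt_add_one _

lemma exists_isRegular_superset_of_leftDeg_lt (hn : D * D + D < Fintype.card V)
    (hE : ∀ a, leftDeg E a < D) (hE' : ∀ b, rightDeg E b ≤ D) : ∃ G, E ⊆ G ∧ IsRegular G D := by
  obtain ⟨G, hG, hmax⟩ := exists_max_image
    {G : Finset (V × V) | E ⊆ G ∧ (∀ a, leftDeg G a ≤ D) ∧ ∀ b, rightDeg G b ≤ D} card
    ⟨E, by simpa using ⟨fun a => (hE a).le, hE'⟩⟩
  simp only [mem_filter, mem_univ, true_and] at hG hmax
  obtain ⟨hEG, hL, hR⟩ := hG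
  have hleft : ∀ a, leftDeg G a = D := fun u => (hL u).eq_of_not_lt fun hu => by
    obtain ⟨G', hEG', hL', hR', hlt⟩ := exists_card_lt_of_leftDeg_lt hn hE hEG hL hR hu
    exact (hmax G' ⟨hEG', hL', hR'⟩).not_gt hlt
  exact ⟨G, hEG, hleft, (forall_rightDeg_eq_iff hR).2 ((forall_leftDeg_eq_iff hL).1 hleft)⟩

def permMatching (σ : Equiv.Perm V) : Finset (V × V) := {e | σ e.1 = e.2}

lemma isRegular_permMatching (σ : Equiv.Perm V) : IsRegular (permMatching σ) 1 :=
  ⟨fun a => card_eq_one.2 ⟨σ a, by ext; simp [permMatching, eq_comm]⟩,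
    fun b => card_eq_one.2 ⟨σ.symm b, by ext; simp [permMatching, ← Equiv.eq_symm_apply]⟩⟩

namespace IsRegular

variable {d k : ℕ}

lemma compl (hG : IsRegular G d) : IsRegular Gᶜ (Fintype.card V - d) :=
  ⟨fun a => by rw [leftDeg_compl, hG.1 a], fun b => by rw [rightDeg_compl, hG.2 b]⟩

lemma union (hG : IsRegular G d) (hH : IsRegular H k) (h : Disjoint G H) :
    IsRegular (G ∪ H) (d + k) :=
  ⟨fun a => by rw [leftDeg_union h, hG.1 a, hH.1 a],
    fun b => by rw [rightDeg_union h, hG.2 b, hH.2 b]⟩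

lemma exists_perm_forall_mem (hG : IsRegular G d) (hd : 0 < d) :
    ∃ σ : Equiv.Perm V, ∀ a, (a, σ a) ∈ G := by
  let t : V → Finset V := fun a => {b | (a, b) ∈ G}
  have hall (A : Finset V) : #A ≤ #(A.biUnion t) := by
    refine Nat.le_of_mul_le_mul_right (card_mul_le_card_mul (r := fun a b => (a, b) ∈ G)
      (m := d) (n := d) (fun a ha => ?_) (fun b _ => ?_)) hd
    · rw [← hG.1 a]
      refine card_le_card fun b hb => ?_
      simp only [mem_filter, mem_univ, true_and] at hb
      simp only [bipartiteAbove, mem_filter, mem_biUnion]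
      exact ⟨⟨a, ha, by simpa [t] using hb⟩, hb⟩
    · rw [← hG.2 b]
      exact card_le_card (filter_subset_filter _ (subset_univ A))
  obtain ⟨f, hf, hft⟩ := (all_card_le_biUnion_card_iff_exists_injective t).1 hall
  exact ⟨Equiv.ofBijective f (Finite.injective_iff_bijective.1 hf), fun a => by simpa [t] using hft a⟩

lemma exists_superset_succ (hG : IsRegular G d) (hd : d < Fintype.card V) :
    ∃ G', G ⊆ G' ∧ IsRegular G' (d + 1) := by
  obtain ⟨σ, hσ⟩ := hG.compl.exists_perm_forall_mem (Nat.sub_pos_of_lt hd)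
  refine ⟨G ∪ permMatching σ, subset_union_left, hG.union (isRegular_permMatching σ) ?_⟩
  refine disjoint_left.2 fun e he heσ => mem_compl.1 (hσ e.1) ?_
  rwa [(mem_filter.1 heσ).2]

lemma exists_superset (hG : IsRegular G d) (hdk : d ≤ k) (hk : k ≤ Fintype.card V) :
    ∃ G', G ⊆ G' ∧ IsRegular G' k := by
  induction k, hdk using Nat.le_induction with
  | base => exact ⟨G, subset_rfl, hG⟩
  | succ k _ ih =>
    obtain ⟨G₁, hGG₁, hG₁⟩ := ih (by omega)
    obtain ⟨G₂, hG₁G₂, hG₂⟩ := hG₁.exists_superset_succ (by omega)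
    exact ⟨G₂, hGG₁.trans hG₁G₂, hG₂⟩

end IsRegular

lemma exists_isRegular_superset {k : ℕ} (hn : D * D + D < Fintype.card V) (hDk : D ≤ k)
    (hk : k ≤ Fintype.card V) (hE : ∀ a, leftDeg E a < D) (hE' : ∀ b, rightDeg E b ≤ D) :
    ∃ G, E ⊆ G ∧ IsRegular G k := by
  obtain ⟨G, hEG, hG⟩ := exists_isRegular_superset_of_leftDeg_lt hn hE hE'
  obtain ⟨G', hGG', hG'⟩ := hG.exists_superset hDk hk
  exact ⟨G', hEG.trans hGG', hG'⟩

end Bipartite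

open Bipartite

lemma degR_eq_leftDeg {n : ℕ} {E : Fin n → Fin n → Prop} {G : Finset (Fin n × Fin n)}
    (h : ∀ a b, (a, b) ∈ G ↔ E a b) (u : Fin n) : degR n E u = leftDeg G u := by
  unfold degR leftDeg
  congr 1
  ext w
  simp [h]

lemma degL_eq_rightDeg {n : ℕ} {E : Fin n → Fin n → Prop} {G : Finset (Fin n × Fin n)}
    (h : ∀ a b, (a, b) ∈ G ↔ E a b) (w : Fin n) : degL n E w = rightDeg G w := by
  unfold degL rightDeg
  congr 1
  ext u
  simp [h]

lemma exists_extension_degR_eq {n D k : ℕ} (hn : D * D + D < n) (hDk : D ≤ k) (hk : k ≤ n)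
    (E : Fin n → Fin n → Prop) (hR : ∀ u, degR n E u < D) (hL : ∀ w, degL n E w ≤ D) :
    ∃ E' : Fin n → Fin n → Prop, (∀ u w, E u w → E' u w) ∧
      (∀ u, degR n E' u = k) ∧ (∀ w, degL n E' w = k) := by
  classical
  let E₀ : Finset (Fin n × Fin n) := {e | E e.1 e.2}
  have hE₀ (a b : Fin n) : (a, b) ∈ E₀ ↔ E a b := by simp [E₀]
  obtain ⟨G, hE₀G, hGL, hGR⟩ := exists_isRegular_superset (by rwa [Fintype.card_fin]) hDk
    (by rwa [Fintype.card_fin]) (fun a => degR_eq_leftDeg hE₀ a ▸ hR a)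
    (fun b => degL_eq_rightDeg hE₀ b ▸ hL b)
  refine ⟨fun a b => (a, b) ∈ G, fun u w h => hE₀G ((hE₀ u w).2 h), fun u => ?_, fun w => ?_⟩
  · rw [degR_eq_leftDeg fun _ _ => Iff.rfl, hGL]
  · rw [degL_eq_rightDeg fun _ _ => Iff.rfl, hGR]

theorem stmt12_general (Δ : ℕ) :
    ∃ s₀ : ℕ, ∀ s : ℕ, s₀ ≤ s → ∃ n₀ : ℕ, ∀ n : ℕ, n₀ ≤ n →
    ∀ (M : ℝ) (k : ℕ),
      M ≤ 2 * Δ * s → M + (s : ℝ) ^ ((2:ℝ)/3) + 1 ≤ k → (k : ℝ) < n / 2 →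
      ∀ E : Fin n → Fin n → Prop,
      (∀ u, M - (s : ℝ) ^ ((2:ℝ)/3) - 1 ≤ (degR n E u : ℝ) ∧
            (degR n E u : ℝ) ≤ M + (s : ℝ) ^ ((2:ℝ)/3)) →
      (∀ w, M - (s : ℝ) ^ ((2:ℝ)/3) - 1 ≤ (degL n E w : ℝ) ∧
            (degL n E w : ℝ) ≤ M + (s : ℝ) ^ ((2:ℝ)/3)) →
      ∃ E' : Fin n → Fin n → Prop, (∀ u w, E u w → E' u w) ∧
        (∀ u, degR n E' u = k) ∧ (∀ w, degL n E' w = k) := by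
  refine ⟨1, fun s hs => ?_⟩
  set B := 2 * Δ * s + s + 1
  refine ⟨B * B + B + 1, fun n hn M k hM hMk hkn E hdR hdL => ?_⟩
  have hsB : M + (s : ℝ) ^ ((2:ℝ)/3) < B := by
    have := Real.rpow_le_self_of_one_le (Nat.one_le_cast.2 hs) (by norm_num : (2:ℝ)/3 ≤ 1)
    push_cast [B]
    linarith
  have hdeg {x : ℕ} (hx : (x : ℝ) ≤ M + (s : ℝ) ^ ((2:ℝ)/3)) : x < min k B :=
    lt_min (by exact_mod_cast (show (x : ℝ) < k by linarith))
      (by exact_mod_cast (show (x : ℝ) < B by linarith))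
  have hBn : min k B * min k B + min k B < n := by
    have := Nat.mul_le_mul (min_le_right k B) (min_le_right k B)
    omega
  exact exists_extension_degR_eq hBn (min_le_left k B)
    (by exact_mod_cast (show (k : ℝ) ≤ n by linarith)) E (fun u => hdeg (hdR u).2)
    (fun w => (hdeg (hdL w).2).le)

theorem stmt12 (Δ : ℕ) (hΔ : 0 < Δ) :
    ∃ s₀ : ℕ, ∀ s : ℕ, s₀ ≤ s → ∃ n₀ : ℕ, ∀ n : ℕ, n₀ ≤ n →
    ∀ (M : ℝ) (k : ℕ),
      M ≤ 2 * Δ * s → M + (s : ℝ) ^ ((2:ℝ)/3) + 1 ≤ k → (k : ℝ) < n / 2 →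
      ∀ E : Fin n → Fin n → Prop,
      (∀ u, M - (s : ℝ) ^ ((2:ℝ)/3) - 1 ≤ (degR n E u : ℝ) ∧
            (degR n E u : ℝ) ≤ M + (s : ℝ) ^ ((2:ℝ)/3)) →
      (∀ w, M - (s : ℝ) ^ ((2:ℝ)/3) - 1 ≤ (degL n E w : ℝ) ∧
            (degL n E w : ℝ) ≤ M + (s : ℝ) ^ ((2:ℝ)/3)) →
      ∃ E' : Fin n → Fin n → Prop, (∀ u w, E u w → E' u w) ∧
        (∀ u, degR n E' u = k) ∧ (∀ w, degL n E' w = k) :=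
  stmt12_general Δ
end

section
/- Suppose 0 < 1/n ≪ 1/M ≪ 1/Δ, 1/r. Let L₁, ..., L_s be graphs, each on rn vertices, each with maximum degree at most Δ and an equitable r-colouring with colour classes X₁^ℓ, ..., X_r^ℓ. Assume e(L_ℓ) ≥ n/5 for each ℓ and ∑_{ℓ=1}^s e(L_ℓ) = M·C(r,2)·n ± M^{3/5}·n/2. Then for each ℓ one can apply a permutation of the indices of the colour classes of L_ℓ so that for all distinct j, j' ∈ [r], ∑_{ℓ=1}^s e(L_ℓ[X_j^ℓ, X_{j'}^ℓ]) / n = M ± M^{3/5}. -/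
/-!
Instead of random permutations and Azuma's inequality we derandomise the second moment method.
Write `w_ℓ(j, j') = e(L_ℓ[X_j^ℓ, X_{j'}^ℓ])`. Since `Sym(r)` acts transitively on ordered pairs of
distinct colours, the average of `w_ℓ(τ j, τ j')` over `τ` is `e(L_ℓ) / C(r,2)`. Fixing the
permutations one graph at a time, each can be chosen so that the total squared deviation from these
means grows by at most `∑ w_ℓ² ≤ Δ n · 2 e(L_ℓ)`. In the end every pair `j ≠ j'` deviates from
`∑ e(L_ℓ) / C(r,2) = (M ± M^{3/5}/2) n` by at most `√(4 Δ M C(r,2)) · n`, which is `≤ M^{3/5} n / 2`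
once `M ≥ (16 Δ C(r,2) + 1)^5`.
-/

open Finset

open Classical in
/-- The number of edges of the graph `G` with one endpoint in `A` and the other in `B`
(for disjoint `A`, `B`). -/
noncomputable def eBetween {V : Type*} (G : SimpleGraph V) (A B : Finset V) : ℕ :=
  ((A ×ˢ B).filter fun p => G.Adj p.1 p.2).card

theorem MulAction.card_nsmul_sum_smul {G X M : Type*} [Group G] [Fintype G] [MulAction G X]
    [Fintype X] [IsPretransitive G X] [AddCommMonoid M] (f : X → M) (x₀ : X) :
    Fintype.card X • ∑ g : G, f (g • x₀) = Fintype.card G • ∑ x, f x := by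
  have hconst : ∀ x, ∑ g : G, f (g • x) = ∑ g : G, f (g • x₀) := by
    intro x
    obtain ⟨h, rfl⟩ := exists_smul_eq G x₀ x
    exact Fintype.sum_equiv (Equiv.mulRight h) _ _ fun g => by simp [mul_smul]
  calc Fintype.card X • ∑ g : G, f (g • x₀) = ∑ x, ∑ g : G, f (g • x) := by
        simp [hconst, Finset.card_univ]
    _ = ∑ g : G, ∑ x, f (g • x) := Finset.sum_comm
    _ = ∑ _g : G, ∑ x, f x :=
        Finset.sum_congr rfl fun g _ => Fintype.sum_equiv (toPerm g) _ _ fun _ => rfl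
    _ = Fintype.card G • ∑ x, f x := by simp [Finset.card_univ]

theorem exists_sum_sq_add_sub_le {ι K : Type*} [Fintype ι] [Fintype K] [Nonempty K]
    (D : ι → ℝ) (g : K → ι → ℝ) (c : ι → ℝ) (Q : ℝ)
    (hmean : ∀ p, ∑ k, g k p = Fintype.card K * c p) (hQ : ∀ k, ∑ p, g k p ^ 2 ≤ Q) :
    ∃ k, ∑ p, (D p + (g k p - c p)) ^ 2 ≤ ∑ p, D p ^ 2 + Q := by
  set N : ℝ := (Fintype.card K : ℝ)
  -- averaging over `k`, the cross term vanishes and the variance is at most the second moment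
  have hpoint : ∀ p, ∑ k, (D p + (g k p - c p)) ^ 2 ≤ ∑ k, g k p ^ 2 + N * D p ^ 2 := by
    intro p
    have hexp : ∑ k, (D p + (g k p - c p)) ^ 2
        = ∑ k, g k p ^ 2 + 2 * (D p - c p) * ∑ k, g k p + N * (D p - c p) ^ 2 := by
      simp only [show ∀ k, (D p + (g k p - c p)) ^ 2
          = g k p ^ 2 + 2 * (D p - c p) * g k p + (D p - c p) ^ 2 from fun k => by ring,
        Finset.sum_add_distrib, ← Finset.mul_sum, Finset.sum_const, Finset.card_univ,
        nsmul_eq_mul, N]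
    rw [hexp, hmean]
    nlinarith [mul_nonneg (Nat.cast_nonneg (Fintype.card K) : (0:ℝ) ≤ N) (sq_nonneg (c p))]
  have htotal : ∑ k, ∑ p, (D p + (g k p - c p)) ^ 2 ≤ ∑ _k : K, (∑ p, D p ^ 2 + Q) :=
    calc ∑ k, ∑ p, (D p + (g k p - c p)) ^ 2
        = ∑ p, ∑ k, (D p + (g k p - c p)) ^ 2 := Finset.sum_comm
      _ ≤ ∑ p, (∑ k, g k p ^ 2 + N * D p ^ 2) := Finset.sum_le_sum fun p _ => hpoint p
      _ = ∑ k, ∑ p, g k p ^ 2 + N * ∑ p, D p ^ 2 := by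
        rw [Finset.sum_add_distrib, Finset.sum_comm, Finset.mul_sum]
      _ ≤ ∑ _k : K, Q + N * ∑ p, D p ^ 2 := by gcongr with k; exact hQ k
      _ = ∑ _k : K, (∑ p, D p ^ 2 + Q) := by simp [N, Finset.card_univ]; ring
  obtain ⟨k, -, hk⟩ := Finset.exists_le_of_sum_le Finset.univ_nonempty htotal
  exact ⟨k, hk⟩

theorem exists_sum_sq_sum_sub_sum_le {ι K : Type*} [Fintype ι] [Fintype K] [Nonempty K] :
    ∀ {s : ℕ} (g : Fin s → K → ι → ℝ) (c : Fin s → ι → ℝ) (Q : Fin s → ℝ),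
    (∀ ℓ p, ∑ k, g ℓ k p = Fintype.card K * c ℓ p) → (∀ ℓ k, ∑ p, g ℓ k p ^ 2 ≤ Q ℓ) →
    ∃ σ : Fin s → K, ∑ p, (∑ ℓ, g ℓ (σ ℓ) p - ∑ ℓ, c ℓ p) ^ 2 ≤ ∑ ℓ, Q ℓ
  | 0, _, _, _, _, _ => ⟨finZeroElim, by simp⟩
  | s + 1, g, c, Q, hmean, hQ => by
    obtain ⟨σ, hσ⟩ := exists_sum_sq_sum_sub_sum_le (fun ℓ : Fin s => g ℓ.castSucc)
      (fun ℓ => c ℓ.castSucc) (fun ℓ => Q ℓ.castSucc) (fun ℓ => hmean _) (fun ℓ => hQ _)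
    obtain ⟨k, hk⟩ := exists_sum_sq_add_sub_le
      (fun p => ∑ ℓ : Fin s, g ℓ.castSucc (σ ℓ) p - ∑ ℓ : Fin s, c ℓ.castSucc p)
      (g (Fin.last s)) (c (Fin.last s)) (Q (Fin.last s)) (hmean _) (hQ _)
    refine ⟨Fin.snoc σ k, ?_⟩
    simp only [Fin.sum_univ_castSucc, Fin.snoc_castSucc, Fin.snoc_last]
    calc ∑ p, (∑ ℓ : Fin s, g ℓ.castSucc (σ ℓ) p + g (Fin.last s) k p
          - (∑ ℓ : Fin s, c ℓ.castSucc p + c (Fin.last s) p)) ^ 2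
        = ∑ p, ((∑ ℓ : Fin s, g ℓ.castSucc (σ ℓ) p - ∑ ℓ : Fin s, c ℓ.castSucc p)
          + (g (Fin.last s) k p - c (Fin.last s) p)) ^ 2 :=
          Finset.sum_congr rfl fun p _ => by ring
      _ ≤ _ := hk
      _ ≤ _ := by linarith

theorem MulAction.exists_sq_sum_smul_sub_mean_le {G X : Type*} [Group G] [Fintype G]
    [MulAction G X] [Fintype X] [MulAction.IsPretransitive G X] {s : ℕ} (w : Fin s → X → ℝ)
    {B : ℝ} (hw₀ : ∀ ℓ x, 0 ≤ w ℓ x) (hwB : ∀ ℓ x, w ℓ x ≤ B) :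
    ∃ σ : Fin s → G, ∀ x : X,
      (∑ ℓ, w ℓ (σ ℓ • x) - (∑ ℓ, ∑ y, w ℓ y) / Fintype.card X) ^ 2
        ≤ B * ∑ ℓ, ∑ y, w ℓ y := by
  have hmean : ∀ ℓ x, ∑ g : G, w ℓ (g • x) = Fintype.card G * ((∑ y, w ℓ y) / Fintype.card X) := by
    intro ℓ x
    have : Nonempty X := ⟨x⟩
    have hX : (Fintype.card X : ℝ) ≠ 0 := Nat.cast_ne_zero.2 (Fintype.card_ne_zero (α := X))
    have := card_nsmul_sum_smul (G := G) (w ℓ) x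
    simp only [nsmul_eq_mul] at this
    field_simp
    linarith
  have hsecond : ∀ ℓ (g : G), ∑ x, w ℓ (g • x) ^ 2 ≤ B * ∑ y, w ℓ y := by
    intro ℓ g
    rw [Fintype.sum_equiv (MulAction.toPerm g) (fun x => w ℓ (g • x) ^ 2) (fun x => w ℓ x ^ 2)
      fun _ => rfl, Finset.mul_sum]
    exact Finset.sum_le_sum fun x _ => by nlinarith [hw₀ ℓ x, hwB ℓ x]
  obtain ⟨σ, hσ⟩ := exists_sum_sq_sum_sub_sum_le (fun ℓ g x => w ℓ (g • x)) _ _ hmean hsecond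
  refine ⟨σ, fun x => ?_⟩
  rw [Finset.sum_div, Finset.mul_sum]
  exact (Finset.single_le_sum (f := fun y => (∑ ℓ, w ℓ (σ ℓ • y) - _) ^ 2)
    (fun y _ => sq_nonneg _) (Finset.mem_univ x)).trans hσ

theorem Finite.of_forall_exists_mem {V ι : Type*} [Finite ι] (Y : ι → Finset V)
    (hcover : ∀ v, ∃ i, v ∈ Y i) : Finite V :=
  Set.finite_univ_iff.1 <| (_root_.Set.finite_iUnion fun i => (Y i).finite_toSet).subset
    fun v _ => Set.mem_iUnion.2 (hcover v)

theorem Fintype.sum_embedding_fin_two_eq_sum {α M : Type*} [Fintype α] [DecidableEq α]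
    [AddCommMonoid M] (f : α × α → M) (hdiag : ∀ a, f (a, a) = 0) :
    ∑ e : Fin 2 ↪ α, f (e 0, e 1) = ∑ p, f p := by
  refine Finset.sum_of_injOn (fun e => (e 0, e 1)) ?_
    (fun _ _ => Finset.mem_coe.2 (Finset.mem_univ _)) ?_ fun _ _ => rfl
  · intro e _ e' _ h
    simp only [Prod.mk.injEq] at h
    ext i
    fin_cases i
    exacts [h.1, h.2]
  · rintro ⟨a, b⟩ - hab
    by_cases h : a = b
    · rw [h, hdiag]
    · exact absurd ⟨Function.Embedding.embFinTwo h, Finset.mem_coe.2 (Finset.mem_univ _), rfl⟩ hab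

namespace SimpleGraph

variable {V : Type*} (G : SimpleGraph V)

open Classical in
theorem eBetween_eq_card_interedges (A B : Finset V) : eBetween G A B = #(G.interedges A B) := rfl

theorem eBetween_le_mul_card [Finite V] {Δ : ℕ} (hdeg : ∀ v, Nat.card {w | G.Adj v w} ≤ Δ)
    (A B : Finset V) : eBetween G A B ≤ Δ * #A := by
  classical
  rw [eBetween_eq_card_interedges, interedges, Rel.interedges_eq_biUnion, mul_comm]
  refine Finset.card_biUnion_le_card_mul _ _ _ fun v _ => ?_
  rw [Finset.card_map]
  refine le_trans ?_ (hdeg v)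
  rw [← Set.ncard_coe_finset, ← Nat.card_coe_set_eq]
  exact Nat.card_mono (Set.toFinite _) fun w hw => (Finset.mem_filter.1 hw).2

theorem eBetween_self_eq_zero {A : Finset V} (hA : ∀ u ∈ A, ∀ v ∈ A, ¬ G.Adj u v) :
    eBetween G A A = 0 := by
  classical
  rw [eBetween_eq_card_interedges, Finset.card_eq_zero, Finset.eq_empty_iff_forall_notMem]
  rintro ⟨u, v⟩ h
  rw [mk_mem_interedges_iff] at h
  exact hA u h.1 v h.2.1 h.2.2

theorem sum_eBetween_eq_two_mul_card_edgeSet [Finite V] {ι : Type*} [Fintype ι]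
    (Y : ι → Finset V) (hdisj : ∀ i j, i ≠ j → Disjoint (Y i) (Y j))
    (hcover : ∀ v, ∃ i, v ∈ Y i) :
    ∑ p : ι × ι, eBetween G (Y p.1) (Y p.2) = 2 * Nat.card G.edgeSet := by
  classical
  cases nonempty_fintype V
  have hunique : ∀ i j v, v ∈ Y i → v ∈ Y j → i = j := fun i j v hi hj =>
    by_contra fun h => Finset.disjoint_left.1 (hdisj i j h) hi hj
  have huniv : (univ : Finset V) = univ.biUnion Y := by
    ext v
    simpa using hcover v
  have hpairwise : ((univ ×ˢ univ : Finset (ι × ι)) : Set (ι × ι)).PairwiseDisjoint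
      fun p => G.interedges (Y p.1) (Y p.2) := by
    rintro p - q - hpq
    refine Finset.disjoint_left.2 fun x hp hq => hpq ?_
    rw [mem_interedges_iff] at hp hq
    exact Prod.ext (hunique _ _ _ hp.1 hq.1) (hunique _ _ _ hp.2.1 hq.2.1)
  calc ∑ p : ι × ι, eBetween G (Y p.1) (Y p.2) = #(G.interedges univ univ) := by
        rw [huniv, interedges_biUnion, Finset.card_biUnion hpairwise]
        rfl
    _ = 2 * #G.edgeFinset := by
        rw [two_mul_card_edgeFinset, interedges_def]
        congr 1
    _ = 2 * Nat.card G.edgeSet := by rw [edgeFinset_card, Nat.card_eq_fintype_card]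

theorem sum_embedding_eBetween_eq_two_mul_card_edgeSet [Finite V] {ι : Type*} [Fintype ι]
    [DecidableEq ι] (Y : ι → Finset V) (hdisj : ∀ i j, i ≠ j → Disjoint (Y i) (Y j))
    (hcover : ∀ v, ∃ i, v ∈ Y i) (hindep : ∀ i, ∀ u ∈ Y i, ∀ v ∈ Y i, ¬ G.Adj u v) :
    ∑ e : Fin 2 ↪ ι, eBetween G (Y (e 0)) (Y (e 1)) = 2 * Nat.card G.edgeSet := by
  rw [Fintype.sum_embedding_fin_two_eq_sum (fun p => eBetween G (Y p.1) (Y p.2))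
    fun i => G.eBetween_self_eq_zero (hindep i)]
  exact G.sum_eBetween_eq_two_mul_card_edgeSet Y hdisj hcover

end SimpleGraph

theorem abs_div_sub_le_rpow_three_fifths {Δ C M n S T : ℝ} (hΔ : 0 ≤ Δ) (hC : 1 ≤ C)
    (hM : (16 * Δ * C + 1) ^ 5 ≤ M) (hn : 0 < n)
    (hT : |T - M * C * n| ≤ M ^ ((3 : ℝ) / 5) * n / 2) (hS : (S - T / C) ^ 2 ≤ Δ * n * (2 * T)) :
    |S / n - M| ≤ M ^ ((3 : ℝ) / 5) := by
  have hb : 0 ≤ 16 * Δ * C + 1 := by positivity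
  have hM₀ : 0 ≤ M := (pow_nonneg hb 5).trans hM
  obtain ⟨a, ha, rfl⟩ : ∃ a, 16 * Δ * C + 1 ≤ a ∧ M = a ^ 5 := by
    refine ⟨M ^ ((5 : ℕ)⁻¹ : ℝ), ?_, (Real.rpow_inv_natCast_pow hM₀ (by norm_num)).symm⟩
    calc 16 * Δ * C + 1 = ((16 * Δ * C + 1) ^ 5) ^ ((5 : ℕ)⁻¹ : ℝ) :=
          (Real.pow_rpow_inv_natCast hb (by norm_num)).symm
      _ ≤ M ^ ((5 : ℕ)⁻¹ : ℝ) := Real.rpow_le_rpow (by positivity) hM (by positivity)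
  have ha₁ : 1 ≤ a := by nlinarith [mul_nonneg hΔ (by linarith : (0:ℝ) ≤ C)]
  have h35 : (a ^ 5) ^ ((3 : ℝ) / 5) = a ^ 3 := by
    rw [← Real.rpow_natCast, ← Real.rpow_mul (by positivity)]
    norm_num
  rw [h35] at hT ⊢
  have hC₀ : 0 < C := by linarith
  have hTle : T ≤ 2 * a ^ 5 * C * n := by
    have h35C : a ^ 3 ≤ a ^ 5 * C :=
      (pow_le_pow_right₀ ha₁ (by norm_num)).trans (le_mul_of_one_le_right hM₀ hC)
    linarith [(abs_le.1 hT).2, mul_le_mul_of_nonneg_right h35C hn.le,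
      (by positivity : 0 ≤ a ^ 5 * C * n)]
  have hdev : |S - T / C| ≤ a ^ 3 * n / 2 := by
    refine abs_le_of_sq_le_sq ?_ (by positivity)
    have h16 : 16 * Δ * C * a ^ 5 ≤ a ^ 6 := by nlinarith [pow_nonneg (by linarith : (0:ℝ) ≤ a) 5]
    nlinarith [mul_nonneg (mul_nonneg hΔ hn.le) (sub_nonneg.2 hTle),
      mul_nonneg (sq_nonneg n) (sub_nonneg.2 h16)]
  have hmean : |T / C - a ^ 5 * n| ≤ a ^ 3 * n / 2 := by
    rw [show T / C - a ^ 5 * n = (T - a ^ 5 * C * n) / C by field_simp, abs_div, abs_of_pos hC₀]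
    exact (div_le_self (abs_nonneg _) hC).trans hT
  rw [show S / n - a ^ 5 = ((S - T / C) + (T / C - a ^ 5 * n)) / n by field_simp; ring,
    abs_div, abs_of_pos hn, div_le_iff₀ hn]
  linarith [abs_add_le (S - T / C) (T / C - a ^ 5 * n)]

theorem stmt14_general (Δ r : ℕ) :
    ∃ M₀ : ℝ, ∀ M : ℝ, M₀ ≤ M → ∃ n₀ : ℕ, ∀ n : ℕ, n₀ ≤ n →
    ∀ (s : ℕ) (V : Type) (L : Fin s → SimpleGraph V) (X : Fin s → Fin r → Finset V),
      (∀ ℓ i, (X ℓ i).card = n) →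
      (∀ ℓ, ∀ i j : Fin r, i ≠ j → Disjoint (X ℓ i) (X ℓ j)) →
      (∀ ℓ, ∀ v : V, ∃ i, v ∈ X ℓ i) →
      (∀ ℓ i, ∀ u ∈ X ℓ i, ∀ v ∈ X ℓ i, ¬ (L ℓ).Adj u v) →
      (∀ ℓ (v : V), Nat.card {w | (L ℓ).Adj v w} ≤ Δ) →
      (∀ ℓ, (n : ℝ) / 5 ≤ (Nat.card (L ℓ).edgeSet : ℝ)) →
      |(∑ ℓ, (Nat.card (L ℓ).edgeSet : ℝ)) - M * (r.choose 2) * n| ≤ M ^ ((3:ℝ)/5) * n / 2 →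
      ∃ σ : Fin s → Equiv.Perm (Fin r),
        ∀ j j' : Fin r, j ≠ j' →
          |(∑ ℓ, (eBetween (L ℓ) (X ℓ (σ ℓ j)) (X ℓ (σ ℓ j')) : ℝ)) / n - M|
            ≤ M ^ ((3:ℝ)/5) := by
  refine ⟨(16 * Δ * r.choose 2 + 1) ^ 5, fun M hM => ⟨1, fun n hn s V L X hcard hdisj hcover
    hindep hdeg _ hsum => ?_⟩⟩
  have hfinite (ℓ : Fin s) : Finite V := Finite.of_forall_exists_mem (X ℓ) (hcover ℓ)
  have := Equiv.Perm.isMultiplyPretransitive (Fin r) 2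
  obtain ⟨σ, hσ⟩ := MulAction.exists_sq_sum_smul_sub_mean_le (G := Equiv.Perm (Fin r))
    (fun ℓ (e : Fin 2 ↪ Fin r) => (eBetween (L ℓ) (X ℓ (e 0)) (X ℓ (e 1)) : ℝ)) (B := Δ * n)
    (fun _ _ => Nat.cast_nonneg _) fun ℓ e => by
      have := hfinite ℓ
      exact_mod_cast hcard ℓ (e 0) ▸ (L ℓ).eBetween_le_mul_card (hdeg ℓ) _ _
  refine ⟨σ, fun j j' hjj' => ?_⟩
  have hedges (ℓ : Fin s) : ∑ e : Fin 2 ↪ Fin r, (eBetween (L ℓ) (X ℓ (e 0)) (X ℓ (e 1)) : ℝ)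
      = 2 * Nat.card (L ℓ).edgeSet := by
    have := hfinite ℓ
    exact_mod_cast (L ℓ).sum_embedding_eBetween_eq_two_mul_card_edgeSet (X ℓ) (hdisj ℓ)
      (hcover ℓ) (hindep ℓ)
  have hpairs : (Fintype.card (Fin 2 ↪ Fin r) : ℝ) = 2 * r.choose 2 := by
    rw [Fintype.card_embedding_eq, Fintype.card_fin, Fintype.card_fin,
      Nat.descFactorial_eq_factorial_mul_choose]
    norm_num
  have hC : (1 : ℝ) ≤ r.choose 2 := by
    have hr : 1 < r := by simpa using Fintype.one_lt_card_iff.2 ⟨j, j', hjj'⟩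
    exact_mod_cast Nat.choose_pos hr
  have key := hσ (Function.Embedding.embFinTwo hjj')
  simp only [Function.Embedding.smul_apply, Equiv.Perm.smul_def,
    Function.Embedding.embFinTwo_apply_zero, Function.Embedding.embFinTwo_apply_one, hedges,
    hpairs, ← Finset.mul_sum] at key
  rw [mul_div_mul_left _ _ two_ne_zero] at key
  exact abs_div_sub_le_rpow_three_fifths (Nat.cast_nonneg Δ) hC (by exact_mod_cast hM)
    (by exact_mod_cast hn) hsum key

theorem stmt14 (Δ r : ℕ) (hΔ : 1 ≤ Δ) (hr : 2 ≤ r) :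
    ∃ M₀ : ℝ, ∀ M : ℝ, M₀ ≤ M → ∃ n₀ : ℕ, ∀ n : ℕ, n₀ ≤ n →
    ∀ (s : ℕ) (V : Type) (L : Fin s → SimpleGraph V) (X : Fin s → Fin r → Finset V),
      (∀ ℓ i, (X ℓ i).card = n) →
      (∀ ℓ, ∀ i j : Fin r, i ≠ j → Disjoint (X ℓ i) (X ℓ j)) →
      (∀ ℓ, ∀ v : V, ∃ i, v ∈ X ℓ i) →
      (∀ ℓ i, ∀ u ∈ X ℓ i, ∀ v ∈ X ℓ i, ¬ (L ℓ).Adj u v) →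
      (∀ ℓ (v : V), Nat.card {w | (L ℓ).Adj v w} ≤ Δ) →
      (∀ ℓ, (n : ℝ) / 5 ≤ (Nat.card (L ℓ).edgeSet : ℝ)) →
      |(∑ ℓ, (Nat.card (L ℓ).edgeSet : ℝ)) - M * (r.choose 2) * n| ≤ M ^ ((3:ℝ)/5) * n / 2 →
      ∃ σ : Fin s → Equiv.Perm (Fin r),
        ∀ j j' : Fin r, j ≠ j' →
          |(∑ ℓ, (eBetween (L ℓ) (X ℓ (σ ℓ j)) (X ℓ (σ ℓ j')) : ℝ)) / n - M|
            ≤ M ^ ((3:ℝ)/5) :=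
  stmt14_general Δ r
end

section
/- Suppose 0 < ε < 2^{-200}. Let G be a bipartite graph with parts A and B where |A| > 2/ε, and set d = e(G)/(|A||B|). Let D be the set of pairs {x, x'} of distinct vertices of A such that (i) both x and x' have degree greater than (d-ε)|B|, and (ii) |N_G(x) ∩ N_G(x')| < (d+ε)²|B|. If |D| > (1/2)(1-5ε)|A|², then G is (ε^{1/6}, d)-regular. -/
open Finset

variable {α : Type*} [DecidableEq α]

open Classical in
/-- The number of edges of the bipartite graph given by `E` between `A` and `B`. -/
noncomputable def eCount (E : α → α → Prop) (A B : Finset α) : ℕ :=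
  ((A ×ˢ B).filter fun p => E p.1 p.2).card

/-- The edge density between `A` and `B`. -/
noncomputable def dens (E : α → α → Prop) (A B : Finset α) : ℝ :=
  (eCount E A B : ℝ) / ((A.card : ℝ) * (B.card : ℝ))

open Classical in
/-- The number of neighbours of `v` in `B`. -/
noncomputable def degIn (E : α → α → Prop) (v : α) (B : Finset α) : ℕ :=
  (B.filter fun b => E v b).card

/-- `(ε,d)`-regularity of the bipartite graph `E` between `A` and `B`. -/
def IsRegularPair (E : α → α → Prop) (A B : Finset α) (ε d : ℝ) : Prop :=
  ∀ A' ⊆ A, ∀ B' ⊆ B, ε * A.card < A'.card → ε * B.card < B'.card →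
    |dens E A' B' - d| ≤ ε

/-- `(ε,d)`-super-regularity: regularity plus degree conditions on all vertices. -/
def IsSuperRegularPair (E : α → α → Prop) (A B : Finset α) (ε d : ℝ) : Prop :=
  IsRegularPair E A B ε d ∧
  (∀ a ∈ A, |(degIn E a B : ℝ) - d * B.card| ≤ ε * B.card) ∧
  (∀ b ∈ B, |(degIn (fun x y => E y x) b A : ℝ) - d * A.card| ≤ ε * A.card)

/-! For `A' ⊆ A` let `f y` be the number of neighbours of `y ∈ B` in `A'`. Expanding the square,
`∑_{y ∈ B} (f y - d|A'|)² = ∑_{x, x' ∈ A'} |N(x) ∩ N(x')| - 2d|A'| e(A', B) + d²|A'|²|B|`.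
Since `|D| > (1 - 5ε)|A|²/2`, fewer than `5ε|A|²` ordered pairs of `A` are diagonal or not in `D`,
and fewer than `5ε|A|` vertices of `A` have degree at most `(d - ε)|B|`. Hence the codegree sum is
at most `|A'|²(d + ε)²|B| + 5ε|A|²|B|` while `e(A', B) ≥ ((|A'| - 5ε|A|)d - ε|A'|)|B|`, and the
variance above is at most `20ε|A|²|B|`. By Cauchy–Schwarz over `B' ⊆ B`,
`(e(A', B') - d|A'||B'|)² ≤ 20ε|A|²|B||B'|`, which is at most `(ε^{1/6}|A'||B'|)²` as soon as
`|A'| > ε^{1/6}|A|` and `|B'| > ε^{1/6}|B|`. -/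

theorem sq_sum_le_card_mul_sum_sq_of_subset {ι : Type*} {s t : Finset ι} (hst : s ⊆ t)
    (f : ι → ℝ) : (∑ i ∈ s, f i) ^ 2 ≤ s.card * ∑ i ∈ t, f i ^ 2 :=
  sq_sum_le_card_mul_sum_sq.trans <| mul_le_mul_of_nonneg_left
    (sum_le_sum_of_subset_of_nonneg hst fun _ _ _ => sq_nonneg _) (Nat.cast_nonneg _)

theorem sum_sub_const_sq {ι : Type*} (s : Finset ι) (f : ι → ℝ) (c : ℝ) :
    ∑ i ∈ s, (f i - c) ^ 2 = ∑ i ∈ s, f i ^ 2 - 2 * c * ∑ i ∈ s, f i + c ^ 2 * s.card := by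
  simp only [sub_sq, sum_add_distrib, sum_sub_distrib, sum_const, nsmul_eq_mul, ← sum_mul,
    ← mul_sum]
  ring

theorem Finset.eq_pair_of_card_eq_two {β : Type*} [DecidableEq β] {P : Finset β}
    (hP : P.card = 2) {x y : β} (hx : x ∈ P) (hy : y ∈ P) (hxy : x ≠ y) : P = {x, y} :=
  (eq_of_subset_of_card_le (by simp [insert_subset_iff, hx, hy])
    (by rw [hP, card_pair hxy])).symm

theorem card_filter_pair_mem_eq_two_mul {β : Type*} [DecidableEq β] {A : Finset β}
    {D : Finset (Finset β)} (hD : D ⊆ A.powersetCard 2) :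
    ((A ×ˢ A).filter fun p => p.1 ≠ p.2 ∧ {p.1, p.2} ∈ D).card = 2 * D.card := by
  rw [card_eq_sum_card_fiberwise (f := fun p => ({p.1, p.2} : Finset β)) (t := D)
    fun p hp => (mem_filter.1 hp).2.2, mul_comm, ← smul_eq_mul, ← sum_const]
  refine sum_congr rfl fun P hP => ?_
  obtain ⟨hPA, hP2⟩ := mem_powersetCard.1 (hD hP)
  have : ((A ×ˢ A).filter fun p => p.1 ≠ p.2 ∧ {p.1, p.2} ∈ D).filter
      (fun p => ({p.1, p.2} : Finset β) = P) = P.offDiag := by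
    ext ⟨x, y⟩
    simp only [mem_filter, mem_product, mem_offDiag]
    constructor
    · rintro ⟨⟨-, hxy, -⟩, rfl⟩
      simp [hxy]
    · rintro ⟨hx, hy, hxy⟩
      obtain rfl := eq_pair_of_card_eq_two hP2 hx hy hxy
      exact ⟨⟨⟨hPA hx, hPA hy⟩, hxy, hP⟩, rfl⟩
  rw [this, offDiag_card, hP2]

section counting

variable {V : Type*} (E : V → V → Prop)

open Classical in
noncomputable def codegIn (x y : V) (B : Finset V) : ℕ :=
  (B.filter fun b => E x b ∧ E y b).card

theorem eCount_eq_sum_degIn (A B : Finset V) : eCount E A B = ∑ x ∈ A, degIn E x B := by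
  classical
  simp only [eCount, degIn, card_filter, sum_product]

theorem eCount_eq_sum_degIn_flip (A B : Finset V) :
    eCount E A B = ∑ y ∈ B, degIn (flip E) y A := by
  classical
  rw [eCount_eq_sum_degIn]
  exact sum_card_bipartiteAbove_eq_sum_card_bipartiteBelow E

theorem sum_sq_degIn_flip_eq_sum_codegIn (A B : Finset V) :
    ∑ y ∈ B, degIn (flip E) y A ^ 2 = ∑ p ∈ A ×ˢ A, codegIn E p.1 p.2 B := by
  classical
  have h (y : V) :
      degIn (flip E) y A ^ 2 = ((A ×ˢ A).filter fun p => E p.1 y ∧ E p.2 y).card := by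
    rw [sq, degIn, ← card_product, ← filter_product]
    rfl
  simp only [h, codegIn]
  exact (sum_card_bipartiteAbove_eq_sum_card_bipartiteBelow
    fun (p : V × V) y => E p.1 y ∧ E p.2 y).symm

theorem eCount_le_card_mul_card (A B : Finset V) : eCount E A B ≤ A.card * B.card := by
  classical
  exact (card_filter_le _ _).trans (card_product A B).le

theorem dens_nonneg (A B : Finset V) : 0 ≤ _root_.dens E A B := by
  unfold _root_.dens; positivity

theorem dens_le_one (A B : Finset V) : _root_.dens E A B ≤ 1 := by
  unfold _root_.dens
  refine div_le_one_of_le₀ ?_ (by positivity)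
  exact_mod_cast eCount_le_card_mul_card E A B

end counting

section codegreeCriterion

variable {V : Type*} (E : V → V → Prop) (A B : Finset V) (d ε : ℝ)

open Classical in
noncomputable def goodPairs [DecidableEq V] : Finset (Finset V) :=
  (A.powersetCard 2).filter fun P =>
    (∀ x ∈ P, (d - ε) * B.card < (degIn E x B : ℝ)) ∧
    (∀ x ∈ P, ∀ y ∈ P, x ≠ y → (codegIn E x y B : ℝ) < (d + ε) ^ 2 * B.card)

open Classical in
noncomputable def lowDegreeVertices : Finset V :=
  A.filter fun x => (degIn E x B : ℝ) ≤ (d - ε) * B.card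

theorem goodPairs_subset_powersetCard [DecidableEq V] : goodPairs E A B d ε ⊆ A.powersetCard 2 :=
  filter_subset _ _

theorem lowDegreeVertices_subset : lowDegreeVertices E A B d ε ⊆ A :=
  filter_subset _ _

theorem goodPairs_subset_powersetCard_sdiff [DecidableEq V] :
    goodPairs E A B d ε ⊆ (A \ lowDegreeVertices E A B d ε).powersetCard 2 := by
  intro P hP
  simp only [goodPairs, mem_filter, mem_powersetCard] at hP ⊢
  refine ⟨fun x hx => mem_sdiff.2 ⟨hP.1.1 hx, fun hlow => ?_⟩, hP.1.2⟩
  exact (mem_filter.1 hlow).2.not_gt (hP.2.1 x hx)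

variable {A B d ε}

theorem card_lowDegreeVertices_le [DecidableEq V]
    (hD : (1/2 : ℝ) * (1 - 5*ε) * A.card^2 < (goodPairs E A B d ε).card) :
    ((lowDegreeVertices E A B d ε).card : ℝ) ≤ 5 * ε * A.card := by
  set m := (lowDegreeVertices E A B d ε).card
  have hmA : m ≤ A.card := card_le_card (lowDegreeVertices_subset E A B d ε)
  have hchoose :
      (goodPairs E A B d ε).card ≤ (A \ lowDegreeVertices E A B d ε).card.choose 2 := by
    simpa only [card_powersetCard] using
      card_le_card (goodPairs_subset_powersetCard_sdiff E A B d ε)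
  have hsdiff : ((A \ lowDegreeVertices E A B d ε).card : ℝ) = A.card - m := by
    rw [card_sdiff_of_subset (lowDegreeVertices_subset E A B d ε), Nat.cast_sub hmA]
  have hchoose' : ((goodPairs E A B d ε).card : ℝ) ≤ (A.card - m) * (A.card - m - 1) / 2 := by
    rw [← hsdiff, ← Nat.cast_choose_two]
    exact_mod_cast hchoose
  have hmA' : (m : ℝ) ≤ A.card := by exact_mod_cast hmA
  have hm0 : (0 : ℝ) ≤ m := Nat.cast_nonneg _
  -- `(1 - 5ε)n² < (n - m)² ≤ n² - mn`
  by_contra! h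
  nlinarith

theorem sum_codegIn_le [DecidableEq V] {A' : Finset V} (hA' : A' ⊆ A)
    (hD : (1/2 : ℝ) * (1 - 5*ε) * A.card^2 < (goodPairs E A B d ε).card) :
    ∑ p ∈ A' ×ˢ A', (codegIn E p.1 p.2 B : ℝ) ≤
      A'.card^2 * ((d + ε)^2 * B.card) + 5 * ε * A.card^2 * B.card := by
  classical
  have hgood := card_filter_pair_mem_eq_two_mul (goodPairs_subset_powersetCard E A B d ε)
  set good : V × V → Prop := fun p => p.1 ≠ p.2 ∧ {p.1, p.2} ∈ goodPairs E A B d ε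
  have hbad : (((A ×ˢ A).filter fun p => ¬ good p).card : ℝ) ≤ 5 * ε * A.card^2 := by
    have h := card_filter_add_card_filter_not (s := A ×ˢ A) good
    rw [hgood, card_product] at h
    have h' : (2 * (goodPairs E A B d ε).card : ℝ) + ((A ×ˢ A).filter fun p => ¬ good p).card
        = A.card^2 := by
      rw [sq]
      exact_mod_cast h
    linarith
  rw [← sum_filter_add_sum_filter_not _ good]
  gcongr ?_ + ?_
  · calc ∑ p ∈ (A' ×ˢ A').filter good, (codegIn E p.1 p.2 B : ℝ)
        ≤ ∑ p ∈ (A' ×ˢ A').filter good, (d + ε)^2 * B.card := by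
          refine sum_le_sum fun p hp => ?_
          obtain ⟨-, hne, hpD⟩ := mem_filter.1 hp
          exact ((mem_filter.1 hpD).2.2 p.1 (by simp) p.2 (by simp) hne).le
      _ ≤ ∑ p ∈ A' ×ˢ A', (d + ε)^2 * B.card :=
          sum_le_sum_of_subset_of_nonneg (filter_subset _ _) fun _ _ _ => by positivity
      _ = A'.card^2 * ((d + ε)^2 * B.card) := by simp [card_product, sq]
  · calc ∑ p ∈ (A' ×ˢ A').filter (¬ good ·), (codegIn E p.1 p.2 B : ℝ)
        ≤ ∑ p ∈ (A ×ˢ A).filter (¬ good ·), (codegIn E p.1 p.2 B : ℝ) :=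
          sum_le_sum_of_subset_of_nonneg
            (filter_subset_filter _ (product_subset_product hA' hA')) fun _ _ _ => by positivity
      _ ≤ ∑ p ∈ (A ×ˢ A).filter (¬ good ·), (B.card : ℝ) :=
          sum_le_sum fun _ _ => by exact_mod_cast card_filter_le _ _
      _ ≤ 5 * ε * A.card^2 * B.card := by
          rw [sum_const, nsmul_eq_mul]
          gcongr

theorem le_eCount_of_subset {A' : Finset V} (hA' : A' ⊆ A) (hd : 0 ≤ d) (hε : 0 ≤ ε) :
    ((A'.card - (lowDegreeVertices E A B d ε).card) * d - ε * A'.card) * B.card ≤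
      (eCount E A' B : ℝ) := by
  classical
  set A'' := A' \ lowDegreeVertices E A B d ε
  have hcard : (A'.card : ℝ) ≤ A''.card + (lowDegreeVertices E A B d ε).card := by
    exact_mod_cast card_le_card_sdiff_add_card
  have hA'' : (A''.card : ℝ) ≤ A'.card := by exact_mod_cast card_le_card sdiff_subset
  have hcoeff : (A'.card - (lowDegreeVertices E A B d ε).card) * d - ε * A'.card ≤
      A''.card * (d - ε) := by
    nlinarith [mul_nonneg hε (sub_nonneg.2 hA'')]
  calc ((A'.card - (lowDegreeVertices E A B d ε).card) * d - ε * A'.card) * B.card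
      ≤ A''.card * ((d - ε) * B.card) := by
        rw [← mul_assoc]
        exact mul_le_mul_of_nonneg_right hcoeff (Nat.cast_nonneg _)
    _ ≤ ∑ x ∈ A'', (degIn E x B : ℝ) := by
        rw [← nsmul_eq_mul]
        refine card_nsmul_le_sum _ _ _ fun x hx => le_of_lt ?_
        obtain ⟨hxA', hxlow⟩ := mem_sdiff.1 hx
        by_contra! h
        exact hxlow (mem_filter.2 ⟨hA' hxA', h⟩)
    _ ≤ ∑ x ∈ A', (degIn E x B : ℝ) :=
        sum_le_sum_of_subset_of_nonneg sdiff_subset fun _ _ _ => Nat.cast_nonneg _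
    _ = eCount E A' B := by rw [eCount_eq_sum_degIn, Nat.cast_sum]

theorem sum_sq_degIn_flip_sub_le [DecidableEq V] {A' : Finset V} (hA' : A' ⊆ A)
    (hd0 : 0 ≤ d) (hd1 : d ≤ 1) (hε0 : 0 ≤ ε) (hε1 : ε ≤ 1)
    (hD : (1/2 : ℝ) * (1 - 5*ε) * A.card^2 < (goodPairs E A B d ε).card) :
    ∑ y ∈ B, ((degIn (flip E) y A' : ℝ) - d * A'.card) ^ 2 ≤ 20 * ε * A.card^2 * B.card := by
  have hcodeg := sum_codegIn_le E hA' hD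
  have hdeg := le_eCount_of_subset E (B := B) hA' hd0 hε0
  have hm := card_lowDegreeVertices_le E hD
  have ha : (A'.card : ℝ) ≤ A.card := by exact_mod_cast card_le_card hA'
  have hsq : ∑ y ∈ B, (degIn (flip E) y A' : ℝ) ^ 2 =
      ∑ p ∈ A' ×ˢ A', (codegIn E p.1 p.2 B : ℝ) := by
    exact_mod_cast sum_sq_degIn_flip_eq_sum_codegIn E A' B
  have hsum : ∑ y ∈ B, (degIn (flip E) y A' : ℝ) = eCount E A' B := by
    exact_mod_cast (eCount_eq_sum_degIn_flip E A' B).symm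
  rw [sum_sub_const_sq, hsq, hsum]
  set n : ℝ := (A.card : ℝ)
  set a : ℝ := (A'.card : ℝ)
  set b : ℝ := (B.card : ℝ)
  set m : ℝ := ((lowDegreeVertices E A B d ε).card : ℝ)
  set e : ℝ := (eCount E A' B : ℝ)
  have ha0 : 0 ≤ a := Nat.cast_nonneg _
  have hm0 : 0 ≤ m := Nat.cast_nonneg _
  have hquad : (4 * d * ε + ε ^ 2) * a ^ 2 ≤ 5 * ε * n ^ 2 :=
    mul_le_mul (by nlinarith) (pow_le_pow_left₀ ha0 ha 2) (sq_nonneg a) (by positivity)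
  have hlow : 2 * d ^ 2 * a * m ≤ 10 * ε * n ^ 2 := by
    have hd2 : d ^ 2 ≤ 1 := pow_le_one₀ hd0 hd1
    have ham : a * m ≤ n * (5 * ε * n) := mul_le_mul ha hm hm0 (ha0.trans ha)
    nlinarith [mul_nonneg ha0 hm0]
  calc ∑ p ∈ A' ×ˢ A', (codegIn E p.1 p.2 B : ℝ) - 2 * (d * a) * e + (d * a) ^ 2 * b
      ≤ a ^ 2 * ((d + ε) ^ 2 * b) + 5 * ε * n ^ 2 * b
          - 2 * (d * a) * (((a - m) * d - ε * a) * b) + (d * a) ^ 2 * b := by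
        have := mul_le_mul_of_nonneg_left hdeg (by positivity : 0 ≤ 2 * (d * a))
        linarith
    _ = ((4 * d * ε + ε ^ 2) * a ^ 2 + 2 * d ^ 2 * a * m + 5 * ε * n ^ 2) * b := by ring
    _ ≤ (5 * ε * n ^ 2 + 10 * ε * n ^ 2 + 5 * ε * n ^ 2) * b := by gcongr
    _ = 20 * ε * n ^ 2 * b := by ring

theorem isRegularPair_of_sum_sq_degIn_flip_sub_le {η : ℝ} (hη : 0 ≤ η)
    (h : ∀ A' ⊆ A, η * A.card < A'.card →
      ∑ y ∈ B, ((degIn (flip E) y A' : ℝ) - d * A'.card) ^ 2 ≤ η ^ 5 * A.card ^ 2 * B.card) :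
    IsRegularPair E A B η d := by
  intro A' hA' B' hB' ha hb
  have ha0 : 0 < (A'.card : ℝ) := lt_of_le_of_lt (by positivity) ha
  have hb0 : 0 < (B'.card : ℝ) := lt_of_le_of_lt (by positivity) hb
  have hdev : (eCount E A' B' : ℝ) - d * (A'.card * B'.card) =
      ∑ y ∈ B', ((degIn (flip E) y A' : ℝ) - d * A'.card) := by
    rw [sum_sub_distrib, sum_const, nsmul_eq_mul, eCount_eq_sum_degIn_flip, Nat.cast_sum]
    ring
  have hsq : ((eCount E A' B' : ℝ) - d * (A'.card * B'.card)) ^ 2 ≤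
      (η * (A'.card * B'.card)) ^ 2 := calc
    _ ≤ B'.card * ∑ y ∈ B, ((degIn (flip E) y A' : ℝ) - d * A'.card) ^ 2 :=
        hdev ▸ sq_sum_le_card_mul_sum_sq_of_subset hB' _
    _ ≤ B'.card * (η ^ 5 * A.card ^ 2 * B.card) := by gcongr; exact h A' hA' ha
    _ = η ^ 2 * (η * A.card) ^ 2 * (η * B.card) * B'.card := by ring
    _ ≤ η ^ 2 * A'.card ^ 2 * B'.card * B'.card := by gcongr
    _ = (η * (A'.card * B'.card)) ^ 2 := by ring
  have hdens : _root_.dens E A' B' - d =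
      ((eCount E A' B' : ℝ) - d * (A'.card * B'.card)) / (A'.card * B'.card) := by
    unfold _root_.dens
    field_simp
  rw [hdens, abs_div, abs_of_pos (mul_pos ha0 hb0), div_le_iff₀ (mul_pos ha0 hb0)]
  exact abs_le_of_sq_le_sq hsq (by positivity)

end codegreeCriterion

open Classical in
theorem stmt16_general (ε : ℝ) (hε0 : 0 < ε) (hεu : ε < 1 / 2^200)
    (E : α → α → Prop) (A B : Finset α)
    (hD : (1/2 : ℝ) * (1 - 5*ε) * (A.card : ℝ)^2 <
      (((A.powersetCard 2).filter fun P =>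
        (∀ x ∈ P, (dens E A B - ε) * B.card < (degIn E x B : ℝ)) ∧
        (∀ x ∈ P, ∀ y ∈ P, x ≠ y →
          ((B.filter fun b => E x b ∧ E y b).card : ℝ) < (dens E A B + ε)^2 * B.card)).card : ℝ)) :
    IsRegularPair E A B (ε ^ ((1:ℝ)/6)) (dens E A B) := by
  set η := ε ^ ((1:ℝ)/6)
  have hη0 : 0 < η := by positivity
  have hεη : ε = η ^ 6 := by
    rw [← Real.rpow_natCast, ← Real.rpow_mul hε0.le]
    norm_num
  clear_value η
  have hη : 20 * η ≤ 1 := by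
    have : η ^ 6 < (1 / 20) ^ 6 := calc
      η ^ 6 = ε := hεη.symm
      _ < 1 / 2 ^ 200 := hεu
      _ < (1 / 20) ^ 6 := by norm_num
    linarith [lt_of_pow_lt_pow_left₀ 6 (by norm_num) this]
  refine isRegularPair_of_sum_sq_degIn_flip_sub_le E hη0.le fun A' hA' _ => ?_
  calc _ ≤ 20 * ε * A.card ^ 2 * B.card :=
        sum_sq_degIn_flip_sub_le E hA' (dens_nonneg E A B) (dens_le_one E A B) hε0.le
          (by linarith) hD
    _ = 20 * η * (η ^ 5 * A.card ^ 2 * B.card) := by rw [hεη]; ring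
    _ ≤ η ^ 5 * A.card ^ 2 * B.card := mul_le_of_le_one_left (by positivity) hη

open Classical in
theorem stmt16 (ε : ℝ) (hε0 : 0 < ε) (hεu : ε < 1 / 2^200)
    (E : α → α → Prop) (A B : Finset α) (hA : 2 / ε < (A.card : ℝ))
    (hD : (1/2 : ℝ) * (1 - 5*ε) * (A.card : ℝ)^2 <
      (((A.powersetCard 2).filter fun P =>
        (∀ x ∈ P, (dens E A B - ε) * B.card < (degIn E x B : ℝ)) ∧
        (∀ x ∈ P, ∀ y ∈ P, x ≠ y →
          ((B.filter fun b => E x b ∧ E y b).card : ℝ) < (dens E A B + ε)^2 * B.card)).card : ℝ)) :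
    IsRegularPair E A B (ε ^ ((1:ℝ)/6)) (dens E A B) :=
  stmt16_general ε hε0 hεu E A B hD
end
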